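/- arXiv:2003.08247 — 9 statements merged into one kernel-verified Lean document; each statement's English description precedes it below -/
import Mathlib

section
/- Any family of 2n-1 matchings, each of size n, in a bipartite graph has a rainbow matching of size n: one can choose edges e_1 ∈ M_{i_1}, ..., e_n ∈ M_{i_n} from n distinct matchings of the family such that {e_1,...,e_n} is a matching. -/
/-!
Grow a rainbow matching one edge at a time. Let `F` be a rainbow matching of size `m` and take
`m + 1` unused colours whose matchings have more than `m` edges. Process the fresh colours one at
a time, keeping a set `X ⊆ F` of edges whose right end can be freed by rerouting `F` along
alternating paths paid for with the colours processed so far. The next fresh matching has more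
than `|X|` edges avoiding the right ends of `F \ X`. If one of them has a left end not covered by
`F`, it extends a suitable rerouting to a rainbow matching of size `m + 1`; otherwise, since they
have distinct left ends, one of them meets an edge `y ∉ X` of `F` at its left end, and swapping it
in for `y` frees the right end of `y`, so `y` joins `X`. As `X` cannot outgrow `F`, the first case
must occur. Among `2n - 1` colours, `m + 1` are unused as long as `m < n`.
-/

/-- A set of edges of a bipartite graph (edges given as pairs) is a matching
if distinct edges share no endpoint. -/
def IsMatching {α β : Type*} (M : Set (α × β)) : Prop :=
  ∀ e ∈ M, ∀ f ∈ M, e ≠ f → e.1 ≠ f.1 ∧ e.2 ≠ f.2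

/-- `F` contains a matching of size `n`. -/
def HasMatchingOfSize {α β : Type*} (n : ℕ) (F : Set (α × β)) : Prop :=
  ∃ e : Fin n → α × β, Function.Injective e ∧ (∀ j, e j ∈ F) ∧
    IsMatching (Set.range e)

/-- The family `F` has a rainbow matching of size `n`: `n` pairwise disjoint
edges chosen from `n` distinct members of the family. -/
def HasRainbowMatchingOfSize {α β ι : Type*} (n : ℕ) (F : ι → Set (α × β)) : Prop :=
  ∃ (g : Fin n ↪ ι) (e : Fin n → α × β), Function.Injective e ∧
    (∀ j, e j ∈ F (g j)) ∧ IsMatching (Set.range e)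

open Finset

section

variable {α β : Type*}

theorem IsMatching.injOn_fst {S : Set (α × β)} (hS : IsMatching S) : Set.InjOn Prod.fst S :=
  fun e he f hf h => by_contra fun hne => (hS e he f hf hne).1 h

theorem IsMatching.injOn_snd {S : Set (α × β)} (hS : IsMatching S) : Set.InjOn Prod.snd S :=
  fun e he f hf h => by_contra fun hne => (hS e he f hf hne).2 h

theorem IsMatching.card_le_card_filter_snd_notMem_add [DecidableEq β] {N : Finset (α × β)}
    (hN : IsMatching (N : Set (α × β))) (T : Finset β) :
    #N ≤ #(N.filter fun f => f.2 ∉ T) + #T := by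
  have hin : #(N.filter fun f => f.2 ∈ T) ≤ #T :=
    card_le_card_of_injOn Prod.snd (fun f hf => (mem_filter.1 hf).2)
      (hN.injOn_snd.mono (coe_subset.2 (filter_subset _ _)))
  have := card_filter_add_card_filter_not (s := N) (fun f => f.2 ∈ T)
  omega

end

namespace Drisko

variable {α β ι : Type*}

/-- A rainbow matching, recorded as a finite set of (colour, edge) pairs. -/
structure IsRainbowMatching (M : ι → Finset (α × β)) (R : Finset (ι × (α × β))) :
    Prop where
  mem : ∀ x ∈ R, x.2 ∈ M x.1
  injOn_color : Set.InjOn Prod.fst (R : Set (ι × (α × β)))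
  injOn_left : Set.InjOn (fun x : ι × (α × β) => x.2.1) R
  injOn_right : Set.InjOn (fun x : ι × (α × β) => x.2.2) R

variable {M : ι → Finset (α × β)}

theorem IsRainbowMatching.empty : IsRainbowMatching M ∅ :=
  ⟨by simp, by simp, by simp, by simp⟩

theorem IsRainbowMatching.mono {R S : Finset (ι × (α × β))} (hR : IsRainbowMatching M R)
    (hS : S ⊆ R) : IsRainbowMatching M S :=
  ⟨fun x hx => hR.mem x (hS hx), hR.injOn_color.mono hS, hR.injOn_left.mono hS,
    hR.injOn_right.mono hS⟩

theorem IsRainbowMatching.hasRainbowMatchingOfSize {R : Finset (ι × (α × β))}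
    (hR : IsRainbowMatching M R) {n : ℕ} (hn : #R = n) :
    HasRainbowMatchingOfSize n (fun i => (M i : Set (α × β))) := by
  subst hn
  set φ := R.equivFin.symm
  have hφ : ∀ j, (φ j : ι × (α × β)) ∈ (R : Set (ι × (α × β))) := fun j => (φ j).2
  have hφinj : ∀ {a b}, (φ a : ι × (α × β)) = φ b → a = b :=
    fun h => φ.injective (Subtype.ext h)
  refine ⟨⟨fun j => (φ j).1.1, fun a b h => hφinj (hR.injOn_color (hφ a) (hφ b) h)⟩,
    fun j => (φ j).1.2, fun a b h => hφinj (hR.injOn_left (hφ a) (hφ b) (congrArg Prod.fst h)),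
    fun j => hR.mem _ (φ j).2, ?_⟩
  rintro _ ⟨a, rfl⟩ _ ⟨b, rfl⟩ hne
  have hab : (φ a : ι × (α × β)) ≠ φ b := fun h => hne (by rw [hφinj h])
  exact ⟨fun h => hab (hR.injOn_left (hφ a) (hφ b) h),
    fun h => hab (hR.injOn_right (hφ a) (hφ b) h)⟩

section

variable [DecidableEq α] [DecidableEq β] [DecidableEq ι]

theorem IsRainbowMatching.insert_of_notMem {R : Finset (ι × (α × β))}
    (hR : IsRainbowMatching M R) {c : ι} {f : α × β} (hf : f ∈ M c)
    (hc : c ∉ R.image Prod.fst)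
    (hleft : f.1 ∉ R.image (·.2.1)) (hright : f.2 ∉ R.image (·.2.2)) :
    IsRainbowMatching M (insert (c, f) R) := by
  have hnot : (c, f) ∉ (R : Set (ι × (α × β))) := fun h => hc (mem_image_of_mem _ h)
  refine ⟨?_, ?_, ?_, ?_⟩
  · simpa only [mem_insert, forall_eq_or_imp] using ⟨hf, hR.mem⟩
  · rw [coe_insert, Set.injOn_insert hnot, ← coe_image]
    exact ⟨hR.injOn_color, hc⟩
  · rw [coe_insert, Set.injOn_insert hnot, ← coe_image]
    exact ⟨hR.injOn_left, hleft⟩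
  · rw [coe_insert, Set.injOn_insert hnot, ← coe_image]
    exact ⟨hR.injOn_right, hright⟩

theorem card_insert_of_color_notMem {R : Finset (ι × (α × β))} {c : ι} {f : α × β}
    (hc : c ∉ R.image Prod.fst) : #(insert (c, f) R) = #R + 1 :=
  card_insert_of_notMem fun h => hc (mem_image_of_mem _ h)

/-- `R` arises from `F` by switching along alternating paths through edges of `X`, paying with
the fresh colours in `U`. -/
structure IsReroute (M : ι → Finset (α × β)) (F X : Finset (ι × (α × β))) (U : Finset ι)
    (R : Finset (ι × (α × β))) : Prop where
  rainbow : IsRainbowMatching M R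
  card_eq : #R = #F
  colors_subset : R.image Prod.fst ⊆ F.image Prod.fst ∪ U
  left_subset : R.image (·.2.1) ⊆ F.image (·.2.1)
  sdiff_subset : F \ X ⊆ R

def Freeable (M : ι → Finset (α × β)) (F X : Finset (ι × (α × β))) (U : Finset ι) :
    Prop :=
  ∀ x ∈ X, ∃ R, IsReroute M F X U R ∧ x.2.2 ∉ R.image (·.2.2)

variable {F X X' R : Finset (ι × (α × β))} {U U' : Finset ι}

theorem isReroute_self (hF : IsRainbowMatching M F) (X : Finset (ι × (α × β)))
    (U : Finset ι) : IsReroute M F X U F :=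
  ⟨hF, rfl, subset_union_left, subset_rfl, sdiff_subset⟩

theorem IsReroute.mono (h : IsReroute M F X U R) (hX : X ⊆ X') (hU : U ⊆ U') :
    IsReroute M F X' U' R :=
  ⟨h.rainbow, h.card_eq, h.colors_subset.trans (union_subset_union subset_rfl hU),
    h.left_subset, (sdiff_subset_sdiff subset_rfl hX).trans h.sdiff_subset⟩

theorem Freeable.exists_isReroute_right_notMem (h : Freeable M F X U)
    (hF : IsRainbowMatching M F) {b : β} (hb : b ∉ (F \ X).image (·.2.2)) :
    ∃ R, IsReroute M F X U R ∧ b ∉ R.image (·.2.2) := by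
  by_cases hbF : b ∈ F.image (·.2.2)
  · obtain ⟨x, hxF, rfl⟩ := mem_image.1 hbF
    have hxX : x ∈ X := by_contra fun hxX => hb (mem_image_of_mem _ (mem_sdiff.2 ⟨hxF, hxX⟩))
    exact h x hxX
  · exact ⟨F, isReroute_self hF X U, hbF⟩

theorem IsReroute.exchange (h : IsReroute M F X U R) {y : ι × (α × β)} (hyF : y ∈ F)
    (hyX : y ∉ X) {c : ι} (hc : c ∉ F.image Prod.fst ∪ U) {f : α × β} (hf : f ∈ M c)
    (hfy : f.1 = y.2.1) (hfR : f.2 ∉ R.image (·.2.2)) :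
    IsReroute M F (insert y X) (insert c U) (insert (c, f) (R.erase y)) ∧
      y.2.2 ∉ (insert (c, f) (R.erase y)).image (·.2.2) := by
  have hyR : y ∈ R := h.sdiff_subset (mem_sdiff.2 ⟨hyF, hyX⟩)
  have hcR : c ∉ (R.erase y).image Prod.fst := fun hcR =>
    hc (h.colors_subset (image_subset_image (erase_subset y R) hcR))
  have hleft : f.1 ∉ (R.erase y).image (·.2.1) := by
    simp only [mem_image, mem_erase, not_exists, not_and, hfy]
    exact fun x ⟨hxy, hxR⟩ hx => hxy (h.rainbow.injOn_left hxR hyR hx)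
  have hright : f.2 ∉ (R.erase y).image (·.2.2) :=
    fun hR => hfR (image_subset_image (erase_subset y R) hR)
  have hrainbow := (h.rainbow.mono (erase_subset y R)).insert_of_notMem hf hcR hleft hright
  refine ⟨⟨hrainbow, ?_, ?_, ?_, ?_⟩, ?_⟩
  · rw [card_insert_of_color_notMem hcR, card_erase_of_mem hyR, ← h.card_eq]
    have := card_pos.2 ⟨y, hyR⟩
    omega
  · rw [image_insert, insert_subset_iff]
    refine ⟨by simp, (image_subset_image (erase_subset y R)).trans ?_⟩
    exact h.colors_subset.trans (union_subset_union subset_rfl (subset_insert c U))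
  · rw [image_insert, insert_subset_iff, hfy]
    exact ⟨mem_image_of_mem _ hyF,
      (image_subset_image (erase_subset y R)).trans h.left_subset⟩
  · intro x hx
    simp only [mem_sdiff, mem_insert, not_or] at hx
    exact mem_insert_of_mem
      (mem_erase.2 ⟨hx.2.1, h.sdiff_subset (mem_sdiff.2 ⟨hx.1, hx.2.2⟩)⟩)
  · simp only [mem_image, mem_insert, mem_erase, not_exists, not_and]
    rintro x (rfl | ⟨hxy, hxR⟩) hx
    · exact hfR (mem_image.2 ⟨y, hyR, hx.symm⟩)
    · exact hxy (h.rainbow.injOn_right hxR hyR hx)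

theorem Freeable.augment_or_extend (h : Freeable M F X U) (hF : IsRainbowMatching M F)
    (hXF : X ⊆ F) {c : ι} (hc : c ∉ F.image Prod.fst ∪ U)
    (hmatch : IsMatching (M c : Set (α × β)))
    (hcard : #F < #(M c)) :
    (∃ R, IsRainbowMatching M R ∧ #R = #F + 1) ∨
      ∃ y ∈ F, y ∉ X ∧ Freeable M F (insert y X) (insert c U) := by
  set C := (M c).filter fun f => f.2 ∉ (F \ X).image (·.2.2)
  have hC : #X < #C := by
    have : #(M c) ≤ #C + #((F \ X).image (·.2.2)) :=
      hmatch.card_le_card_filter_snd_notMem_add _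
    have := card_image_le (s := F \ X) (f := (·.2.2))
    have := card_sdiff_of_subset hXF
    have := card_le_card hXF
    omega
  by_cases hfree : ∃ f ∈ C, f.1 ∉ F.image (·.2.1)
  · obtain ⟨f, hfC, hfF⟩ := hfree
    obtain ⟨hfM, hfX⟩ := mem_filter.1 hfC
    obtain ⟨R, hR, hfR⟩ := h.exists_isReroute_right_notMem hF hfX
    have hcR : c ∉ R.image Prod.fst := fun hcR => hc (hR.colors_subset hcR)
    refine Or.inl
      ⟨_, hR.rainbow.insert_of_notMem hfM hcR (fun hfR => hfF (hR.left_subset hfR)) hfR, ?_⟩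
    rw [card_insert_of_color_notMem hcR, hR.card_eq]
  · push Not at hfree
    obtain ⟨f, hfC, hfX⟩ : ∃ f ∈ C, f.1 ∉ X.image (·.2.1) := by
      by_contra! hall
      have := card_le_card_of_injOn Prod.fst hall
        (hmatch.injOn_fst.mono (coe_subset.2 (filter_subset _ _)))
      have := card_image_le (s := X) (f := (·.2.1))
      omega
    obtain ⟨y, hyF, hy⟩ := mem_image.1 (hfree f hfC)
    have hyX : y ∉ X := fun hyX => hfX (hy ▸ mem_image_of_mem _ hyX)
    obtain ⟨hfM, hfXright⟩ := mem_filter.1 hfC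
    obtain ⟨R, hR, hfR⟩ := h.exists_isReroute_right_notMem hF hfXright
    refine Or.inr ⟨y, hyF, hyX, fun x hx => ?_⟩
    rcases mem_insert.1 hx with rfl | hxX
    · exact ⟨_, hR.exchange hyF hyX hc hfM hy.symm hfR⟩
    · obtain ⟨Rx, hRx, hxRx⟩ := h x hxX
      exact ⟨Rx, hRx.mono (subset_insert _ X) (subset_insert c U), hxRx⟩

theorem IsRainbowMatching.exists_card_succ (hF : IsRainbowMatching M F) {K : Finset ι}
    (hK : Disjoint K (F.image Prod.fst)) (hKcard : #F < #K)
    (hmatch : ∀ c ∈ K, IsMatching (M c : Set (α × β))) (hcard : ∀ c ∈ K, #F < #(M c)) :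
    ∃ R, IsRainbowMatching M R ∧ #R = #F + 1 := by
  suffices h : ∀ k X U, #F - #X = k → X ⊆ F → U ⊆ K → #U ≤ #X → Freeable M F X U →
      ∃ R, IsRainbowMatching M R ∧ #R = #F + 1 from
    h _ ∅ ∅ rfl (empty_subset F) (empty_subset K) le_rfl (by simp [Freeable])
  intro k
  induction k using Nat.strong_induction_on with
  | _ k ih =>
  intro X U hk hXF hUK hUX hX
  have hXcard := card_le_card hXF
  obtain ⟨c, hcK, hcU⟩ := exists_mem_notMem_of_card_lt_card (s := U) (t := K) (by omega)
  have hc : c ∉ F.image Prod.fst ∪ U := by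
    rw [mem_union, not_or]
    exact ⟨disjoint_left.1 hK hcK, hcU⟩
  rcases hX.augment_or_extend hF hXF hc (hmatch c hcK) (hcard c hcK) with hR | ⟨y, hyF, hyX, hy⟩
  · exact hR
  · have hyXF : insert y X ⊆ F := insert_subset hyF hXF
    have := card_le_card hyXF
    have := card_insert_le c U
    have := card_insert_of_notMem hyX
    exact ih _ (by omega) _ _ rfl hyXF (insert_subset hcK hUK) (by omega) hy

end

theorem exists_isRainbowMatching_card [Fintype ι] [DecidableEq α] [DecidableEq β]
    [DecidableEq ι] {n : ℕ} (hι : 2 * n - 1 ≤ Fintype.card ι)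
    (hmatch : ∀ i, IsMatching (M i : Set (α × β))) (hcard : ∀ i, n ≤ #(M i)) :
    ∀ m ≤ n, ∃ R, IsRainbowMatching M R ∧ #R = m
  | 0, _ => ⟨∅, .empty, rfl⟩
  | m + 1, hm => by
    obtain ⟨F, hF, rfl⟩ :=
      exists_isRainbowMatching_card hι hmatch hcard _ (Nat.le_of_succ_le hm)
    refine hF.exists_card_succ (K := univ \ F.image Prod.fst) sdiff_disjoint ?_
      (fun c _ => hmatch c) (fun c _ => Nat.lt_of_lt_of_le hm (hcard c))
    rw [card_sdiff_of_subset (subset_univ _), card_univ]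
    have := card_image_le (s := F) (f := Prod.fst)
    omega

end Drisko

/-- Drisko's theorem (Aharoni–Berger form): `2n-1` matchings of size `n` in a
bipartite graph have a rainbow matching of size `n`. -/
theorem stmt_1 {α β : Type*} (n : ℕ) (M : Fin (2 * n - 1) → Finset (α × β))
    (hmatch : ∀ i, IsMatching (↑(M i) : Set (α × β)))
    (hcard : ∀ i, (M i).card = n) :
    HasRainbowMatchingOfSize n (fun i => (↑(M i) : Set (α × β))) := by
  classical
  obtain ⟨R, hR, hRn⟩ := Drisko.exists_isRainbowMatching_card (by simp) hmatch
    (fun i => (hcard i).ge) n le_rfl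
  exact hR.hasRainbowMatchingOfSize hRn
end

section
/- Let n ≥ 1 and k ≥ 1. If F_1, ..., F_{2n+k-2} are sets of edges in a bipartite graph such that the union of every k of them contains a matching of size n, then there exists a rainbow matching of size n (a matching of n edges chosen from n distinct members of the family). -/
/-!
Grow a rainbow matching `R` one edge at a time. If `|R| = m < n`, build a chain of edges
`x₀, x₁, …` of new colours, each sharing its left end with a distinct edge `pₜ` of `R`, and whose
right end is unmatched by `R` or is the right end of an earlier `pₗ`. While the chain has `t ≤ m`
edges, `R` and the chain use at most `2m ≤ 2n - 2` colours, so `k` colours remain unused and their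
union contains a matching `N` of size `n`. At most `m - t` edges of `N` end at right ends of
non-partners, so at least `t + 1` end at unmatched or partner right ends. If one of these has an
unmatched left end it starts an augmenting path; otherwise one of them is matched on the left to
a non-partner and extends the chain. The partners are distinct edges of `R`, so the chain cannot
grow forever and `R` is augmented.
-/

open Finset

section Matching

variable {α β : Type*}

theorem isMatching_iff_injOn {M : Set (α × β)} :
    IsMatching M ↔ Set.InjOn Prod.fst M ∧ Set.InjOn Prod.snd M := by
  refine ⟨fun h => ⟨fun e he f hf hef => ?_, fun e he f hf hef => ?_⟩, ?_⟩
  · by_contra hne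
    exact (h e he f hf hne).1 hef
  · by_contra hne
    exact (h e he f hf hne).2 hef
  · rintro ⟨h₁, h₂⟩ e he f hf hne
    exact ⟨fun h => hne (h₁ he hf h), fun h => hne (h₂ he hf h)⟩

theorem HasMatchingOfSize.exists_finset [DecidableEq α] [DecidableEq β] {n : ℕ}
    {U : Set (α × β)} (h : HasMatchingOfSize n U) :
    ∃ N : Finset (α × β), N.card = n ∧ ↑N ⊆ U ∧
      Set.InjOn Prod.fst (N : Set (α × β)) ∧ Set.InjOn Prod.snd (N : Set (α × β)) := by
  obtain ⟨e, he, heU, hM⟩ := h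
  refine ⟨univ.image e, by rw [card_image_of_injective _ he, card_fin], ?_, ?_⟩
  · simpa [Set.subset_def] using heU
  · simpa [coe_image] using isMatching_iff_injOn.1 hM

end Matching

section Rainbow

variable {ι α β : Type*} {F : ι → Set (α × β)}

/-- A coloured edge `(i, a, b) : ι × α × β` stands for the edge `(a, b)` taken from `F i`. -/
structure IsRainbowMatching (F : ι → Set (α × β)) (R : Finset (ι × α × β)) : Prop where
  mem : ∀ p ∈ R, p.2 ∈ F p.1
  injOn_colour : Set.InjOn Prod.fst (R : Set (ι × α × β))
  injOn_left : Set.InjOn (fun p => p.2.1) (R : Set (ι × α × β))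
  injOn_right : Set.InjOn (fun p => p.2.2) (R : Set (ι × α × β))

theorem isRainbowMatching_empty : IsRainbowMatching F ∅ :=
  ⟨by simp, by simp, by simp, by simp⟩

theorem IsRainbowMatching.mono {R S : Finset (ι × α × β)} (hR : IsRainbowMatching F R)
    (hS : S ⊆ R) : IsRainbowMatching F S :=
  ⟨fun p hp => hR.mem p (hS hp), hR.injOn_colour.mono hS, hR.injOn_left.mono hS,
    hR.injOn_right.mono hS⟩

theorem IsRainbowMatching.hasRainbowMatchingOfSize {R : Finset (ι × α × β)}
    (hR : IsRainbowMatching F R) : HasRainbowMatchingOfSize R.card F := by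
  set p : Fin R.card → ι × α × β := fun j => R.equivFin.symm j
  have hpR : ∀ j, p j ∈ R := fun j => (R.equivFin.symm j).2
  have hp : Function.Injective p := Subtype.val_injective.comp R.equivFin.symm.injective
  have hleft : ∀ j j', (p j).2.1 = (p j').2.1 → j = j' := fun j j' h =>
    hp (hR.injOn_left (hpR j) (hpR j') h)
  refine ⟨⟨fun j => (p j).1, fun j j' h => hp (hR.injOn_colour (hpR j) (hpR j') h)⟩,
    fun j => (p j).2, fun j j' h => hleft j j' (congrArg Prod.fst h),
    fun j => hR.mem _ (hpR j), isMatching_iff_injOn.2 ⟨?_, ?_⟩⟩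
  · rintro _ ⟨j, rfl⟩ _ ⟨j', rfl⟩ h
    rw [hleft j j' h]
  · rintro _ ⟨j, rfl⟩ _ ⟨j', rfl⟩ h
    rw [hp (hR.injOn_right (hpR j) (hpR j') h)]

variable [DecidableEq ι] [DecidableEq β]

/-- The list is stored newest first: `(xⱼ, pⱼ)` pairs an edge `xⱼ` of a new colour with the edge
`pⱼ ∈ R` sharing its left end. As the right end of `xⱼ` is unmatched or that of an *earlier*
partner, following right ends down the chain ends at an unmatched vertex: the order rules out
cycles. -/
inductive AlternatingChain (F : ι → Set (α × β)) (R : Finset (ι × α × β)) :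
    List ((ι × α × β) × (ι × α × β)) → Prop
  | nil : AlternatingChain F R []
  | cons {x p : ι × α × β} {X : List ((ι × α × β) × (ι × α × β))} :
      AlternatingChain F R X → x.2 ∈ F x.1 → p ∈ R → x.2.1 = p.2.1 → p ∉ X.map Prod.snd →
      x.1 ∉ R.image Prod.fst → x.1 ∉ X.map (·.1.1) →
      (x.2.2 ∉ R.image (·.2.2) ∨ x.2.2 ∈ X.map (·.2.2.2)) → AlternatingChain F R ((x, p) :: X)

namespace AlternatingChain

variable {R : Finset (ι × α × β)} {X : List ((ι × α × β) × (ι × α × β))}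

theorem nodup_partners (hX : AlternatingChain F R X) :
    (X.map Prod.snd).Nodup ∧ ∀ p ∈ X.map Prod.snd, p ∈ R := by
  induction hX with
  | nil => simp
  | cons _ _ hp _ hpX _ _ _ ih =>
    rw [List.map_cons, List.nodup_cons]
    exact ⟨⟨hpX, ih.1⟩, by simpa [hp] using ih.2⟩

theorem length_le_card (hX : AlternatingChain F R X) : X.length ≤ R.card := by
  obtain ⟨hnd, hsub⟩ := hX.nodup_partners
  simpa using (hnd.subperm fun p hp => mem_toList.2 (hsub p hp)).length_le

theorem transfer {R' : Finset (ι × α × β)} (hX : AlternatingChain F R X) {c : ι}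
    (hpart : ∀ p ∈ X.map Prod.snd, p ∈ R')
    (hcol : R'.image Prod.fst ⊆ insert c (R.image Prod.fst)) (hcX : c ∉ X.map (·.1.1))
    (hright : R'.image (·.2.2) ⊆ R.image (·.2.2)) : AlternatingChain F R' X := by
  induction hX with
  | nil => exact nil
  | cons _ hx _ hxp hpX hxc hxX hxr ih =>
    simp only [List.map_cons, List.mem_cons, not_or] at hpart hcX
    refine cons (ih (fun p hp => hpart p (Or.inr hp)) hcX.2) hx (hpart _ (Or.inl rfl)) hxp hpX
      (fun h => ?_) hxX (hxr.imp_left fun h h' => h (hright h'))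
    rcases mem_insert.1 (hcol h) with h | h
    exacts [hcX.1 h.symm, hxc h]

end AlternatingChain

variable [DecidableEq α]

theorem IsRainbowMatching.insert_of_fresh {R : Finset (ι × α × β)} {q : ι × α × β}
    (hR : IsRainbowMatching F R) (hq : q.2 ∈ F q.1) (hc : q.1 ∉ R.image Prod.fst)
    (hl : q.2.1 ∉ R.image (·.2.1)) (hr : q.2.2 ∉ R.image (·.2.2)) :
    IsRainbowMatching F (insert q R) := by
  have hqR : q ∉ (R : Set (ι × α × β)) := fun h => hc (mem_image_of_mem _ h)
  rw [← mem_coe, coe_image] at hc hl hr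
  refine ⟨?_, ?_, ?_, ?_⟩
  · simpa [hq] using hR.mem
  all_goals rw [coe_insert, Set.injOn_insert hqR]
  exacts [⟨hR.injOn_colour, hc⟩, ⟨hR.injOn_left, hl⟩, ⟨hR.injOn_right, hr⟩]

theorem IsRainbowMatching.swap {R : Finset (ι × α × β)} {p q : ι × α × β}
    (hR : IsRainbowMatching F R) (hp : p ∈ R) (hq : q.2 ∈ F q.1) (hc : q.1 ∉ R.image Prod.fst)
    (hl : q.2.1 ∉ R.image (·.2.1)) (hr : q.2.2 = p.2.2) :
    IsRainbowMatching F (insert q (R.erase p)) := by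
  refine (hR.mono (erase_subset p R)).insert_of_fresh hq (fun h => hc ?_) (fun h => hl ?_) ?_
  · exact image_subset_image (erase_subset p R) h
  · exact image_subset_image (erase_subset p R) h
  · rintro hmem
    obtain ⟨p', hp', hpp'⟩ := mem_image.1 hmem
    exact (mem_erase.1 hp').1 (hR.injOn_right (mem_erase.1 hp').2 hp (hpp'.trans hr))

/-- The augmenting path: `y` takes the place of the partner whose right end it shares, that
partner's chain edge becomes the new free edge, and so on down the chain. -/
theorem AlternatingChain.augment {R : Finset (ι × α × β)}
    {X : List ((ι × α × β) × (ι × α × β))} (hX : AlternatingChain F R X)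
    (hR : IsRainbowMatching F R) {y : ι × α × β} (hy : y.2 ∈ F y.1)
    (hyc : y.1 ∉ R.image Prod.fst) (hyX : y.1 ∉ X.map (·.1.1)) (hyl : y.2.1 ∉ R.image (·.2.1))
    (hyr : y.2.2 ∉ R.image (·.2.2) ∨ y.2.2 ∈ X.map (·.2.2.2)) :
    ∃ S, IsRainbowMatching F S ∧ S.card = R.card + 1 := by
  induction X generalizing R y with
  | nil =>
    have hyr : y.2.2 ∉ R.image (·.2.2) := by simpa using hyr
    have hyR : y ∉ R := fun h => hyc (mem_image_of_mem _ h)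
    exact ⟨_, hR.insert_of_fresh hy hyc hyl hyr, card_insert_of_notMem hyR⟩
  | cons xp X ih =>
    obtain ⟨x, p⟩ := xp
    cases hX with
    | cons hX hx hp hxp hpX hxc hxX hxr =>
    simp only [List.map_cons, List.mem_cons, not_or] at hyX hyr
    by_cases hyp : y.2.2 = p.2.2
    · set R' := insert y (R.erase p)
      have hR' : IsRainbowMatching F R' := hR.swap hp hy hyc hyl hyp
      have hcol : R'.image Prod.fst ⊆ insert y.1 (R.image Prod.fst) := by
        rw [image_insert]
        exact insert_subset_insert _ (image_subset_image (erase_subset p R))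
      have hright : R'.image (·.2.2) ⊆ R.image (·.2.2) := by
        rw [image_insert, hyp]
        exact insert_subset (mem_image_of_mem _ hp) (image_subset_image (erase_subset p R))
      have hcard : R'.card = R.card := by
        rw [card_insert_of_notMem fun h => hyc (mem_image_of_mem _ (mem_of_mem_erase h)),
          card_erase_add_one hp]
      have hxl : x.2.1 ∉ R'.image (·.2.1) := by
        rw [image_insert, mem_insert, not_or, hxp]
        refine ⟨fun h => hyl (h ▸ mem_image_of_mem _ hp), fun h => ?_⟩
        obtain ⟨p', hp', hpp'⟩ := mem_image.1 h
        exact (mem_erase.1 hp').1 (hR.injOn_left (mem_erase.1 hp').2 hp hpp')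
      have hpart : ∀ p' ∈ X.map Prod.snd, p' ∈ R' := fun p' h' =>
        mem_insert_of_mem (mem_erase.2 ⟨fun h => hpX (h ▸ h'), hX.nodup_partners.2 p' h'⟩)
      rw [← hcard]
      exact ih (hX.transfer hpart hcol hyX.2 hright) hR' hx
        (fun h => (mem_insert.1 (hcol h)).elim (fun h => hyX.1 h.symm) hxc) hxX hxl
        (hxr.imp_left fun h h' => h (hright h'))
    · exact ih hX hR hy hyc hyX.2 hyl (hyr.imp_right fun h => h.resolve_left hyp)

/-- The other edges of `N` are matched injectively into the `|R| - |X|` edges of `R` that are not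
partners. -/
theorem AlternatingChain.length_lt_card_filter {R : Finset (ι × α × β)}
    {X : List ((ι × α × β) × (ι × α × β))} (hX : AlternatingChain F R X) {N : Finset (α × β)}
    (hN : Set.InjOn Prod.snd (N : Set (α × β))) (hRN : R.card < N.card) :
    X.length < (N.filter fun w => w.2 ∉ R.image (·.2.2) ∨ w.2 ∈ X.map (·.2.2.2)).card := by
  classical
  obtain ⟨hnd, hsub⟩ := hX.nodup_partners
  set P := (X.map Prod.snd).toFinset
  have hPR : P ⊆ R := fun p hp => hsub p (List.mem_toFinset.1 hp)
  have hP : P.card = X.length := by rw [List.toFinset_card_of_nodup hnd, List.length_map]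
  have hrest : (N.filter fun w => ¬(w.2 ∉ R.image (·.2.2) ∨ w.2 ∈ X.map (·.2.2.2))).card ≤
      (R \ P).card := by
    refine (card_le_card_of_injOn Prod.snd (fun w hw => ?_) (hN.mono (filter_subset _ _))).trans
      (card_image_le (f := (·.2.2)))
    simp only [coe_filter, not_or, not_not, Set.mem_ofPred_eq] at hw
    obtain ⟨-, hwR, hwX⟩ := hw
    obtain ⟨p, hp, hpw⟩ := mem_image.1 hwR
    refine mem_coe.2 (mem_image.2 ⟨p, mem_sdiff.2 ⟨hp, fun hpP => hwX ?_⟩, hpw⟩)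
    rw [← hpw]
    simpa using List.mem_map_of_mem (f := (·.2.2)) (List.mem_toFinset.1 hpP)
  have := card_filter_add_card_filter_not (s := N)
    fun w => w.2 ∉ R.image (·.2.2) ∨ w.2 ∈ X.map (·.2.2.2)
  rw [card_sdiff_of_subset hPR, hP] at hrest
  have := hX.length_le_card
  omega

theorem exists_matching_avoiding [Fintype ι] {n k : ℕ}
    (hunion : ∀ K : Finset ι, K.card = k → HasMatchingOfSize n (⋃ i ∈ K, F i))
    (C : Finset ι) (hC : C.card + k ≤ Fintype.card ι) :
    ∃ N : Finset (α × β), N.card = n ∧ Set.InjOn Prod.fst (N : Set (α × β)) ∧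
      Set.InjOn Prod.snd (N : Set (α × β)) ∧ ∀ w ∈ N, ∃ i ∉ C, w ∈ F i := by
  obtain ⟨K, hKC, hK⟩ := exists_subset_card_eq (s := Cᶜ) (n := k) (by rw [card_compl]; omega)
  obtain ⟨N, hN, hNK, hl, hr⟩ := (hunion K hK).exists_finset
  refine ⟨N, hN, hl, hr, fun w hw => ?_⟩
  obtain ⟨i, hiK, hwi⟩ := Set.mem_iUnion₂.1 (hNK hw)
  exact ⟨i, mem_compl.1 (hKC hiK), hwi⟩

theorem AlternatingChain.augment_or_extend [Fintype ι] {n k : ℕ}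
    (hι : 2 * n + k - 2 ≤ Fintype.card ι)
    (hunion : ∀ K : Finset ι, K.card = k → HasMatchingOfSize n (⋃ i ∈ K, F i))
    {R : Finset (ι × α × β)} {X : List ((ι × α × β) × (ι × α × β))}
    (hX : AlternatingChain F R X) (hR : IsRainbowMatching F R) (hRn : R.card < n) :
    (∃ S, IsRainbowMatching F S ∧ S.card = R.card + 1) ∨
      ∃ x p, AlternatingChain F R ((x, p) :: X) := by
  set C := R.image Prod.fst ∪ (X.map (·.1.1)).toFinset
  have hC : C.card + k ≤ Fintype.card ι := by
    have : C.card ≤ _ := card_union_le (R.image Prod.fst) (X.map (·.1.1)).toFinset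
    have := card_image_le (s := R) (f := Prod.fst)
    have := (X.map (·.1.1)).toFinset_card_le
    have := hX.length_le_card
    rw [List.length_map] at *
    omega
  obtain ⟨N, hNcard, hNl, hNr, hNF⟩ := exists_matching_avoiding hunion C hC
  have hfresh : ∀ w ∈ N, ∃ i, w ∈ F i ∧ i ∉ R.image Prod.fst ∧ i ∉ X.map (·.1.1) := by
    intro w hw
    obtain ⟨i, hiC, hi⟩ := hNF w hw
    simp only [C, mem_union, List.mem_toFinset, not_or] at hiC
    exact ⟨i, hi, hiC⟩
  set W := N.filter fun w => w.2 ∉ R.image (·.2.2) ∨ w.2 ∈ X.map (·.2.2.2)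
  have hW : X.length < W.card := hX.length_lt_card_filter hNr (hNcard ▸ hRn)
  by_cases hfree : ∃ w ∈ W, w.1 ∉ R.image (·.2.1)
  · obtain ⟨w, hwW, hw⟩ := hfree
    obtain ⟨hwN, hwr⟩ := mem_filter.1 hwW
    obtain ⟨i, hi, hiR, hiX⟩ := hfresh w hwN
    exact Or.inl (hX.augment hR (y := (i, w)) hi hiR hiX hw hwr)
  · push Not at hfree
    obtain ⟨w, hwW, hwX⟩ : ∃ w ∈ W, w.1 ∉ X.map (·.2.2.1) := by
      have : (X.map (·.2.2.1)).toFinset.card < (W.image Prod.fst).card := by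
        rw [card_image_of_injOn (hNl.mono (filter_subset _ _))]
        exact (List.toFinset_card_le _).trans_lt (by rwa [List.length_map])
      obtain ⟨a, ha, haX⟩ := exists_mem_notMem_of_card_lt_card this
      obtain ⟨w, hw, rfl⟩ := mem_image.1 ha
      exact ⟨w, hw, fun h => haX (List.mem_toFinset.2 h)⟩
    obtain ⟨hwN, hwr⟩ := mem_filter.1 hwW
    obtain ⟨p, hp, hpw⟩ := mem_image.1 (hfree w hwW)
    obtain ⟨i, hi, hiR, hiX⟩ := hfresh w hwN
    refine Or.inr ⟨(i, w), p, .cons hX hi hp hpw.symm (fun hpX => hwX ?_) hiR hiX hwr⟩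
    rw [← hpw]
    simpa using List.mem_map_of_mem (f := (·.2.1)) hpX

theorem IsRainbowMatching.exists_card_succ [Fintype ι] {n k : ℕ}
    (hι : 2 * n + k - 2 ≤ Fintype.card ι)
    (hunion : ∀ K : Finset ι, K.card = k → HasMatchingOfSize n (⋃ i ∈ K, F i))
    {R : Finset (ι × α × β)} (hR : IsRainbowMatching F R) (hRn : R.card < n) :
    ∃ S, IsRainbowMatching F S ∧ S.card = R.card + 1 := by
  by_contra hno
  have hchain : ∀ t, ∃ X, AlternatingChain F R X ∧ X.length = t := by
    intro t
    induction t with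
    | zero => exact ⟨[], .nil, rfl⟩
    | succ t ih =>
      obtain ⟨X, hX, rfl⟩ := ih
      obtain ⟨x, p, hxX⟩ := (hX.augment_or_extend hι hunion hR hRn).resolve_left hno
      exact ⟨_, hxX, rfl⟩
  obtain ⟨X, hX, hlen⟩ := hchain (R.card + 1)
  have := hX.length_le_card
  omega

end Rainbow

theorem hasRainbowMatchingOfSize_of_cooperative {ι α β : Type*} [Fintype ι] {n k : ℕ}
    {F : ι → Set (α × β)} (hι : 2 * n + k - 2 ≤ Fintype.card ι)
    (hunion : ∀ K : Finset ι, K.card = k → HasMatchingOfSize n (⋃ i ∈ K, F i)) :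
    HasRainbowMatchingOfSize n F := by
  classical
  have hgrow : ∀ j ≤ n, ∃ R, IsRainbowMatching F R ∧ R.card = j := by
    intro j
    induction j with
    | zero => exact fun _ => ⟨∅, isRainbowMatching_empty, rfl⟩
    | succ j ih =>
      intro hj
      obtain ⟨R, hR, rfl⟩ := ih (by omega)
      exact hR.exists_card_succ hι hunion (by omega)
  obtain ⟨R, hR, rfl⟩ := hgrow n le_rfl
  exact hR.hasRainbowMatchingOfSize

theorem stmt_2_general {α β : Type*} (n k : ℕ)
    (F : Fin (2 * n + k - 2) → Set (α × β))
    (hunion : ∀ K : Finset (Fin (2 * n + k - 2)), K.card = k →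
      HasMatchingOfSize n (⋃ i ∈ K, F i)) :
    HasRainbowMatchingOfSize n F :=
  hasRainbowMatchingOfSize_of_cooperative (by simp) hunion

/-- Cooperative Drisko: `2n+k-2` edge sets in a bipartite graph, the union of
every `k` of which contains a matching of size `n`, have a rainbow matching of
size `n`. -/
theorem stmt_2 {α β : Type*} (n k : ℕ) (hn : 1 ≤ n) (hk : 1 ≤ k)
    (F : Fin (2 * n + k - 2) → Set (α × β))
    (hunion : ∀ K : Finset (Fin (2 * n + k - 2)), K.card = k →
      HasMatchingOfSize n (⋃ i ∈ K, F i)) :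
    HasRainbowMatchingOfSize n F :=
  stmt_2_general n k F hunion
end

section
/- For every n ≥ 2 and k ≥ 2, there exists a family of 2n+k-4 nonempty sets of edges in the complete bipartite graph K_{n,n} such that the union of any k of them contains a matching of size n, but there is no rainbow matching of size n. Explicitly, with sides {a_1,...,a_n} and {b_1,...,b_n}, take n-1 copies of {a_1b_1,...,a_nb_n}, n-2 copies of {a_1b_2, a_2b_3, ..., a_{n-1}b_n, a_nb_1}, and k-1 copies of the singleton {a_1b_2}. -/
open Finset Function

theorem HasMatchingOfSize.mono {α β : Type*} {n : ℕ} {F G : Set (α × β)} (hFG : F ⊆ G)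
    (hF : HasMatchingOfSize n F) : HasMatchingOfSize n G :=
  let ⟨e, he, heF, hM⟩ := hF
  ⟨e, he, fun j => hFG (heF j), hM⟩

section Matching

variable {ι α β : Type*} {e : ι → α × β}

theorem IsMatching.injective_fst (he : Injective e) (hM : IsMatching (Set.range e)) :
    Injective fun j => (e j).1 := fun a b hab => by
  by_contra hne
  exact (hM _ ⟨a, rfl⟩ _ ⟨b, rfl⟩ (he.ne hne)).1 hab

theorem IsMatching.injective_snd (he : Injective e) (hM : IsMatching (Set.range e)) :
    Injective fun j => (e j).2 := fun a b hab => by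
  by_contra hne
  exact (hM _ ⟨a, rfl⟩ _ ⟨b, rfl⟩ (he.ne hne)).2 hab

end Matching

def shiftEdges (n : ℕ) (c : Fin n) : Set (Fin n × Fin n) :=
  {p | p.2 = p.1 + c}

section ShiftEdges

variable {n : ℕ}

theorem hasMatchingOfSize_shiftEdges (c : Fin n) : HasMatchingOfSize n (shiftEdges n c) := by
  refine ⟨fun j => (j, j + c), fun a b h => congrArg Prod.fst h, fun j => rfl, ?_⟩
  rintro _ ⟨a, rfl⟩ _ ⟨b, rfl⟩ hne
  have hab : a ≠ b := fun h => hne (by rw [h])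
  exact ⟨hab, fun h => hab (add_right_cancel h)⟩

theorem shiftEdges_nonempty [NeZero n] (c : Fin n) : (shiftEdges n c).Nonempty :=
  ⟨(0, 0 + c), rfl⟩

theorem disjoint_shiftEdges {c d : Fin n} (hcd : c ≠ d) :
    Disjoint (shiftEdges n c) (shiftEdges n d) :=
  Set.disjoint_left.mpr fun _ hc hd => hcd (add_left_cancel (hc.symm.trans hd))

open Fin.CommRing in
theorem forall_mem_shiftEdges_zero_or_forall_mem_shiftEdges_one [NeZero n]
    {e : Fin n → Fin n × Fin n} (hfst : Injective fun j => (e j).1)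
    (hsnd : Injective fun j => (e j).2) (he : ∀ j, e j ∈ shiftEdges n 0 ∪ shiftEdges n 1) :
    (∀ j, e j ∈ shiftEdges n 0) ∨ (∀ j, e j ∈ shiftEdges n 1) := by
  classical
  have hdiff : ∀ j, (e j).2 - (e j).1 = if e j ∈ shiftEdges n 1 then 1 else 0 := by
    intro j
    split_ifs with h1
    · rw [show (e j).2 = (e j).1 + 1 from h1, add_sub_cancel_left]
    · rw [show (e j).2 = (e j).1 + 0 from (he j).resolve_right h1, add_zero, sub_self]
  have hsum_eq : ∀ f : Fin n → Fin n, Injective f → ∑ j, f j = ∑ x, x := fun f hf =>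
    Fintype.sum_bijective f (Finite.injective_iff_bijective.mp hf) _ _ fun _ => rfl
  have hB : ((univ.filter fun j => e j ∈ shiftEdges n 1).card : Fin n) = 0 := by
    rw [← sum_boole, ← Fintype.sum_congr _ _ hdiff, sum_sub_distrib, hsum_eq _ hsnd,
      hsum_eq _ hfst, sub_self]
  set B := univ.filter fun j => e j ∈ shiftEdges n 1
  have hBn : B.card ≤ n := (card_filter_le _ _).trans_eq (card_fin n)
  rcases Nat.eq_zero_or_pos B.card with h0 | hpos
  · left
    intro j
    have hj : j ∉ B := by simp [card_eq_zero.mp h0]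
    exact (he j).resolve_right fun h => hj (mem_filter.mpr ⟨mem_univ j, h⟩)
  · right
    have hcard : B.card = n := hBn.antisymm (Nat.le_of_dvd hpos (Fin.natCast_eq_zero.mp hB))
    intro j
    have hj : j ∈ B := eq_univ_of_card B (by simpa using hcard) ▸ mem_univ j
    exact (mem_filter.mp hj).2

end ShiftEdges

theorem Fin.exists_mem_val_lt_of_sub_lt_card {m b : ℕ} {K : Finset (Fin m)}
    (hK : m - b < K.card) : ∃ i ∈ K, i.val < b := by
  by_contra! h
  have : K.card ≤ (Ico b m).card :=
    card_le_card_of_injOn Fin.val (fun i hi => mem_coe.mpr (mem_Ico.mpr ⟨h i hi, i.isLt⟩))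
      (Fin.val_injective.injOn)
  rw [Nat.card_Ico] at this
  omega

def sharpFamily (n k : ℕ) [NeZero n] : Fin (2 * n + k - 4) → Set (Fin n × Fin n) :=
  fun i => if i.val < n - 1 then shiftEdges n 0
    else if i.val < 2 * n - 3 then shiftEdges n 1 else {(0, 1)}

section SharpFamily

variable {n k : ℕ} [NeZero n]

theorem sharpFamily_nonempty (i : Fin (2 * n + k - 4)) : (sharpFamily n k i).Nonempty := by
  unfold sharpFamily
  split_ifs
  · exact shiftEdges_nonempty 0
  · exact shiftEdges_nonempty 1
  · exact Set.singleton_nonempty _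

theorem sharpFamily_eq_shiftEdges_zero {i : Fin (2 * n + k - 4)} (hi : i.val < n - 1) :
    sharpFamily n k i = shiftEdges n 0 :=
  if_pos hi

theorem sharpFamily_subset_shiftEdges_one {i : Fin (2 * n + k - 4)} (hi : n - 1 ≤ i.val) :
    sharpFamily n k i ⊆ shiftEdges n 1 := by
  rw [sharpFamily, if_neg hi.not_gt]
  split_ifs
  · exact subset_rfl
  · simp [shiftEdges]

theorem sharpFamily_eq_singleton {i : Fin (2 * n + k - 4)} (hi : 2 * n - 3 ≤ i.val) :
    sharpFamily n k i = {(0, 1)} := by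
  rw [sharpFamily, if_neg (by omega), if_neg hi.not_gt]

theorem sharpFamily_subset_union (i : Fin (2 * n + k - 4)) :
    sharpFamily n k i ⊆ shiftEdges n 0 ∪ shiftEdges n 1 := by
  rcases lt_or_ge i.val (n - 1) with hi | hi
  · exact (sharpFamily_eq_shiftEdges_zero hi).subset.trans Set.subset_union_left
  · exact (sharpFamily_subset_shiftEdges_one hi).trans Set.subset_union_right

theorem hasMatchingOfSize_biUnion_sharpFamily (hk : 1 ≤ k)
    {K : Finset (Fin (2 * n + k - 4))} (hK : K.card = k) :
    HasMatchingOfSize n (⋃ i ∈ K, sharpFamily n k i) := by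
  obtain ⟨i, hiK, hi⟩ :=
    Fin.exists_mem_val_lt_of_sub_lt_card (b := 2 * n - 3) (K := K) (by omega)
  refine HasMatchingOfSize.mono (Set.subset_biUnion_of_mem hiK) ?_
  unfold sharpFamily
  split_ifs <;> exact hasMatchingOfSize_shiftEdges _

theorem disjoint_shiftEdges_zero_one (hn : 2 ≤ n) : Disjoint (shiftEdges n 0) (shiftEdges n 1) :=
  disjoint_shiftEdges (by rw [ne_comm, Ne, Fin.one_eq_zero_iff]; omega)

variable {g : Fin n ↪ Fin (2 * n + k - 4)} {e : Fin n → Fin n × Fin n}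

theorem not_forall_mem_shiftEdges_zero_of_rainbow (hn : 2 ≤ n)
    (heS : ∀ j, e j ∈ sharpFamily n k (g j)) : ¬ ∀ j, e j ∈ shiftEdges n 0 := by
  intro hdiag
  have hg : ∀ j, (g j).val < n - 1 := fun j => by
    by_contra! hj
    exact (disjoint_shiftEdges_zero_one hn).notMem_of_mem_left (hdiag j)
      (sharpFamily_subset_shiftEdges_one hj (heS j))
  have := card_le_card_of_injOn (s := univ) (t := range (n - 1)) (fun j => (g j).val)
    (fun j _ => by simpa using hg j) fun a _ b _ hab => g.injective (Fin.ext hab)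
  rw [card_univ, Fintype.card_fin, card_range] at this
  omega

theorem not_forall_mem_shiftEdges_one_of_rainbow (hn : 2 ≤ n) (he : Injective e)
    (heS : ∀ j, e j ∈ sharpFamily n k (g j)) : ¬ ∀ j, e j ∈ shiftEdges n 1 := by
  intro hcyc
  have hg : ∀ j, n - 1 ≤ (g j).val := fun j => by
    by_contra! hj
    exact (disjoint_shiftEdges_zero_one hn).notMem_of_mem_left
      (sharpFamily_eq_shiftEdges_zero hj ▸ heS j) (hcyc j)
  have hsingle : ∀ j, 2 * n - 3 ≤ (g j).val → e j = (0, 1) := fun j hj => by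
    simpa [sharpFamily_eq_singleton hj] using heS j
  -- At most one `j` is sent to the singletons, so capping the index at `2n - 3` stays injective.
  have hinj : Injective fun j => min (g j).val (2 * n - 3) := by
    intro a b (hab : min (g a).val (2 * n - 3) = min (g b).val (2 * n - 3))
    rcases lt_or_ge (g a).val (2 * n - 3) with ha | ha <;>
      rcases lt_or_ge (g b).val (2 * n - 3) with hb | hb
    · rw [min_eq_left ha.le, min_eq_left hb.le] at hab
      exact g.injective (Fin.ext hab)
    · rw [min_eq_left ha.le, min_eq_right hb] at hab
      omega
    · rw [min_eq_right ha, min_eq_left hb.le] at hab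
      omega
    · exact he ((hsingle a ha).trans (hsingle b hb).symm)
  have := card_le_card_of_injOn (s := univ) (t := Icc (n - 1) (2 * n - 3)) _
    (fun j _ => mem_coe.mpr (mem_Icc.mpr ⟨le_min (hg j) (by omega), min_le_right _ _⟩))
    hinj.injOn
  rw [card_univ, Fintype.card_fin, Nat.card_Icc] at this
  omega

theorem not_hasRainbowMatchingOfSize_sharpFamily (hn : 2 ≤ n) :
    ¬ HasRainbowMatchingOfSize n (sharpFamily n k) := by
  rintro ⟨g, e, he, heS, hM⟩
  rcases forall_mem_shiftEdges_zero_or_forall_mem_shiftEdges_one (hM.injective_fst he)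
    (hM.injective_snd he) (fun j => sharpFamily_subset_union _ (heS j)) with hdiag | hcyc
  · exact not_forall_mem_shiftEdges_zero_of_rainbow hn heS hdiag
  · exact not_forall_mem_shiftEdges_one_of_rainbow hn he heS hcyc

end SharpFamily

/-- Sharpness of the main theorem: for every `n ≥ 2`, `k ≥ 2` there is a
family of `2n+k-4` nonempty edge sets in `K_{n,n}` whose every `k`-union
contains a matching of size `n`, but with no rainbow matching of size `n`. -/
theorem stmt_4 (n k : ℕ) (hn : 2 ≤ n) (hk : 2 ≤ k) :
    ∃ S : Fin (2 * n + k - 4) → Set (Fin n × Fin n),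
      (∀ i, (S i).Nonempty) ∧
      (∀ K : Finset (Fin (2 * n + k - 4)), K.card = k →
        HasMatchingOfSize n (⋃ i ∈ K, S i)) ∧
      ¬ HasRainbowMatchingOfSize n S := by
  have : NeZero n := ⟨by omega⟩
  exact ⟨sharpFamily n k, sharpFamily_nonempty,
    fun _ hK => hasMatchingOfSize_biUnion_sharpFamily (by omega) hK,
    not_hasRainbowMatchingOfSize_sharpFamily hn⟩
end

section
/- For any simplicial complex C and any face S of C, the link lk_C(S) = {T ⊆ V \ S : S ∪ T ∈ C} satisfies λ(lk_C(S)) ≤ λ(C), where λ denotes the minimal d such that the complex is d-Leray. -/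
/-- An abstract simplicial complex on vertex set `V`: a downward closed set of
finite sets. -/
def IsComplex {V : Type*} (C : Set (Finset V)) : Prop :=
  ∀ s ∈ C, ∀ t ⊆ s, t ∈ C

/-- The simplicial boundary of a single simplex `s` (as a formal ℤ-linear
combination of its codimension-one faces, with the usual alternating signs
determined by the linear order on the vertices). -/
noncomputable def simplexBoundary {V : Type*} [LinearOrder V] (s : Finset V) :
    Finset V →₀ ℤ :=
  ∑ i : Fin (s.sort (· ≤ ·)).length,
    ((-1 : ℤ) ^ (i : ℕ)) • Finsupp.single (s.erase ((s.sort (· ≤ ·)).get i)) 1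

/-- The boundary operator on formal ℤ-linear combinations of finite subsets of
`V`, extended linearly from `simplexBoundary`.  (Chains of vertices are sent to
multiples of the empty set, so this complex is the augmented one and computes
reduced homology.) -/
noncomputable def boundaryMap (V : Type*) [LinearOrder V] :
    (Finset V →₀ ℤ) →ₗ[ℤ] (Finset V →₀ ℤ) :=
  Finsupp.linearCombination ℤ simplexBoundary

/-- The faces of the induced subcomplex `C[W]` having exactly `m` vertices. -/
def facesIn {V : Type*} (C : Set (Finset V)) (W : Set V) (m : ℕ) :
    Set (Finset V) :=
  {s | s ∈ C ∧ ↑s ⊆ W ∧ s.card = m}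

/-- A chain is supported on a set `A` of simplices. -/
def SupportedOn {V : Type*} (A : Set (Finset V)) (x : Finset V →₀ ℤ) : Prop :=
  ∀ s, x s ≠ 0 → s ∈ A

/-- The reduced simplicial homology `H̃_j(C[W];ℤ)` vanishes: every `j`-cycle of
the induced subcomplex `C[W]` is the boundary of a `(j+1)`-chain of `C[W]`.
(A `j`-dimensional simplex has `j+1` vertices; since the chain complex is
augmented, the `j = 0` case is the reduced one.) -/
def ReducedHomologyVanishes {V : Type*} [LinearOrder V] (C : Set (Finset V))
    (W : Set V) (j : ℕ) : Prop :=
  ∀ x : Finset V →₀ ℤ, SupportedOn (facesIn C W (j + 1)) x →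
    boundaryMap V x = 0 →
      ∃ y : Finset V →₀ ℤ, SupportedOn (facesIn C W (j + 2)) y ∧
        boundaryMap V y = x

/-- `C` is `d`-Leray: all reduced homology groups `H̃_j(C[W];ℤ)` with `j ≥ d`
of all induced subcomplexes vanish. -/
def IsLeray {V : Type*} [LinearOrder V] (d : ℕ) (C : Set (Finset V)) : Prop :=
  ∀ (W : Set V) (j : ℕ), d ≤ j → ReducedHomologyVanishes C W j

/-- The link of a face `S` in the complex `C`. -/
def linkOf {V : Type*} [DecidableEq V] (C : Set (Finset V)) (S : Finset V) :
    Set (Finset V) :=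
  {T | Disjoint T S ∧ S ∪ T ∈ C}

/-!
Links of links are links, `lk_{lk_C(v)}(S) = lk_C(S ∪ {v})`, so it suffices to treat the link of
a single vertex `v`. A `j`-cycle `x` of `lk_C(v)[W]` is a cycle of `C[W ∖ {v}]`, hence `x = ∂y`
there. With `c` the cone with apex `v`, `c x - y` is a `(j+1)`-cycle of `C[W ∪ {v}]`, hence
`c x - y = ∂u`. Contraction `ι` at `v` anticommutes with `∂`, inverts `c` and kills chains
avoiding `v`, so `x = ι (c x - y) = -∂ (ι u)` with `ι u` a chain of `lk_C(v)[W]`.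
-/

open Finset

section FaceSign

variable {V : Type*} [LinearOrder V]

def faceSign (s : Finset V) (u : V) : ℤ :=
  (-1) ^ #{w ∈ s | w < u}

lemma card_filter_lt_sort_get (s : Finset V) (i : Fin (s.sort (· ≤ ·)).length) :
    #{w ∈ s | w < (s.sort (· ≤ ·)).get i} = i := by
  have hl : StrictMono (s.sort (· ≤ ·)).get := s.sortedLT_sort.strictMono_get
  have hfilter :
      {w ∈ s | w < (s.sort (· ≤ ·)).get i} = (Iio i).map ⟨_, hl.injective⟩ := by
    ext w
    simp only [mem_filter, mem_map, mem_Iio, Function.Embedding.coeFn_mk]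
    constructor
    · rintro ⟨hw, hlt⟩
      obtain ⟨j, rfl⟩ := List.mem_iff_get.mp ((mem_sort (· ≤ ·)).mpr hw)
      exact ⟨j, hl.lt_iff_lt.mp hlt, rfl⟩
    · rintro ⟨j, hj, rfl⟩
      exact ⟨(mem_sort (· ≤ ·)).mp (List.get_mem _ j), hl hj⟩
  rw [hfilter, card_map, Fin.card_Iio]

lemma simplexBoundary_eq_sum (s : Finset V) :
    simplexBoundary s = ∑ u ∈ s, faceSign s u • Finsupp.single (s.erase u) 1 := by
  refine sum_bij (fun i _ => (s.sort (· ≤ ·)).get i)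
    (fun i _ => (mem_sort (· ≤ ·)).mp (List.get_mem _ _))
    (fun i _ j _ hij => (s.sort_nodup _).get_inj_iff.mp hij) (fun u hu => ?_)
    (fun i _ => by rw [faceSign, card_filter_lt_sort_get])
  obtain ⟨i, rfl⟩ := List.mem_iff_get.mp ((mem_sort (· ≤ ·)).mpr hu)
  exact ⟨i, mem_univ _, rfl⟩

lemma faceSign_mul_self (s : Finset V) (u : V) : faceSign s u * faceSign s u = 1 := by
  rw [faceSign, ← mul_pow, mul_neg_one, neg_neg, one_pow]

variable {s : Finset V} {u v : V}

lemma faceSign_insert_of_not_lt (h : ¬v < u) : faceSign (insert v s) u = faceSign s u := by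
  rw [faceSign, faceSign, filter_insert, if_neg h]

lemma faceSign_insert_of_lt (hv : v ∉ s) (h : v < u) :
    faceSign (insert v s) u = -faceSign s u := by
  rw [faceSign, faceSign, filter_insert, if_pos h,
    card_insert_of_notMem fun hm => hv (mem_filter.mp hm).1, pow_succ, mul_neg_one]

lemma faceSign_erase_of_not_lt (h : ¬u < v) : faceSign (s.erase u) v = faceSign s v := by
  rw [faceSign, faceSign, filter_erase, erase_eq_of_notMem (by simp [h])]

lemma faceSign_erase_of_lt (hu : u ∈ s) (h : u < v) :
    faceSign (s.erase u) v = -faceSign s v := by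
  rw [faceSign, faceSign, filter_erase, ← card_erase_add_one (mem_filter.mpr ⟨hu, h⟩),
    pow_succ, mul_neg_one, neg_neg]

lemma faceSign_insert_erase_cases (hv : v ∉ s) (hu : u ∈ s) :
    faceSign (insert v s) u = faceSign s u ∧ faceSign (s.erase u) v = -faceSign s v ∨
      faceSign (insert v s) u = -faceSign s u ∧ faceSign (s.erase u) v = faceSign s v := by
  rcases (ne_of_mem_of_not_mem hu hv).lt_or_gt with h | h
  · exact .inl ⟨faceSign_insert_of_not_lt (lt_asymm h), faceSign_erase_of_lt hu h⟩
  · exact .inr ⟨faceSign_insert_of_lt hv h, faceSign_erase_of_not_lt (lt_asymm h)⟩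

lemma faceSign_insert_self_mul (hv : v ∉ s) (hu : u ∈ s) :
    faceSign (insert v s) v * faceSign (insert v s) u =
      -(faceSign s u * faceSign (insert v (s.erase u)) v) := by
  rw [faceSign_insert_of_not_lt (lt_irrefl v), faceSign_insert_of_not_lt (lt_irrefl v)]
  rcases faceSign_insert_erase_cases hv hu with ⟨h₁, h₂⟩ | ⟨h₁, h₂⟩ <;>
    rw [h₁, h₂] <;> ring

lemma faceSign_insert_mul_insert_erase (hv : v ∉ s) (hu : u ∈ s) :
    faceSign (insert v s) u * faceSign (insert v (s.erase u)) v =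
      -(faceSign (insert v s) v * faceSign s u) := by
  rw [faceSign_insert_of_not_lt (lt_irrefl v), faceSign_insert_of_not_lt (lt_irrefl v)]
  rcases faceSign_insert_erase_cases hv hu with ⟨h₁, h₂⟩ | ⟨h₁, h₂⟩ <;>
    rw [h₁, h₂] <;> ring

end FaceSign

section VertexOperators

variable {V : Type*} [LinearOrder V] (v : V)

noncomputable def vertexCone : (Finset V →₀ ℤ) →ₗ[ℤ] (Finset V →₀ ℤ) :=
  Finsupp.linearCombination ℤ fun t =>
    if v ∈ t then 0 else faceSign (insert v t) v • Finsupp.single (insert v t) 1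

noncomputable def vertexContract : (Finset V →₀ ℤ) →ₗ[ℤ] (Finset V →₀ ℤ) :=
  Finsupp.linearCombination ℤ fun s =>
    if v ∈ s then faceSign s v • Finsupp.single (s.erase v) 1 else 0

variable {v}

lemma boundaryMap_single (s : Finset V) :
    boundaryMap V (Finsupp.single s 1) = simplexBoundary s := by
  rw [boundaryMap, Finsupp.linearCombination_single, one_smul]

lemma vertexCone_single_of_mem {t : Finset V} (h : v ∈ t) :
    vertexCone v (Finsupp.single t 1) = 0 := by
  rw [vertexCone, Finsupp.linearCombination_single, one_smul, if_pos h]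

lemma vertexCone_single_of_notMem {t : Finset V} (h : v ∉ t) :
    vertexCone v (Finsupp.single t 1) =
      faceSign (insert v t) v • Finsupp.single (insert v t) 1 := by
  rw [vertexCone, Finsupp.linearCombination_single, one_smul, if_neg h]

lemma vertexContract_single_of_mem {s : Finset V} (h : v ∈ s) :
    vertexContract v (Finsupp.single s 1) = faceSign s v • Finsupp.single (s.erase v) 1 := by
  rw [vertexContract, Finsupp.linearCombination_single, one_smul, if_pos h]

lemma vertexContract_single_of_notMem {s : Finset V} (h : v ∉ s) :
    vertexContract v (Finsupp.single s 1) = 0 := by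
  rw [vertexContract, Finsupp.linearCombination_single, one_smul, if_neg h]

lemma boundaryMap_vertexCone_single_add (s : Finset V) :
    boundaryMap V (vertexCone v (Finsupp.single s 1)) + vertexCone v (simplexBoundary s) =
      Finsupp.single s 1 := by
  by_cases hv : v ∈ s
  · have hcone : ∀ u ∈ s.erase v,
        vertexCone v (faceSign s u • Finsupp.single (s.erase u) 1) = 0 := fun u hu => by
      rw [map_smul, vertexCone_single_of_mem (mem_erase.mpr ⟨(ne_of_mem_erase hu).symm, hv⟩),
        smul_zero]
    rw [vertexCone_single_of_mem hv, map_zero, zero_add, simplexBoundary_eq_sum, map_sum,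
      ← sum_erase_add s _ hv, sum_eq_zero hcone, zero_add, map_smul,
      vertexCone_single_of_notMem (notMem_erase v s), insert_erase hv, smul_smul,
      faceSign_mul_self, one_smul]
  · rw [vertexCone_single_of_notMem hv, map_smul, boundaryMap_single, simplexBoundary_eq_sum,
      simplexBoundary_eq_sum, map_sum, sum_insert hv, erase_insert hv, smul_add, smul_smul,
      faceSign_mul_self, one_smul, smul_sum, add_assoc, add_eq_left, ← sum_add_distrib]
    refine sum_eq_zero fun u hu => ?_
    rw [map_smul, vertexCone_single_of_notMem fun h => hv (mem_of_mem_erase h),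
      erase_insert_of_ne (ne_of_mem_of_not_mem hu hv).symm, smul_smul, smul_smul, ← add_smul,
      faceSign_insert_self_mul hv hu, neg_add_cancel, zero_smul]

lemma vertexContract_simplexBoundary_add (s : Finset V) :
    vertexContract v (simplexBoundary s) + boundaryMap V (vertexContract v (Finsupp.single s 1)) =
      0 := by
  by_cases hv : v ∈ s
  · obtain ⟨t, hvt, rfl⟩ : ∃ t, v ∉ t ∧ s = insert v t :=
      ⟨s.erase v, notMem_erase v s, (insert_erase hv).symm⟩
    rw [vertexContract_single_of_mem hv, erase_insert hvt, map_smul, boundaryMap_single,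
      simplexBoundary_eq_sum, simplexBoundary_eq_sum, map_sum, sum_insert hvt, map_smul,
      vertexContract_single_of_notMem (notMem_erase v _), smul_zero, zero_add, smul_sum,
      ← sum_add_distrib]
    refine sum_eq_zero fun u hu => ?_
    have hvtu : v ∉ t.erase u := fun h => hvt (mem_of_mem_erase h)
    rw [map_smul, erase_insert_of_ne (ne_of_mem_of_not_mem hu hvt).symm,
      vertexContract_single_of_mem (mem_insert_self v _), erase_insert hvtu, smul_smul,
      smul_smul, ← add_smul, faceSign_insert_mul_insert_erase hvt hu, neg_add_cancel, zero_smul]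
  · rw [vertexContract_single_of_notMem hv, map_zero, add_zero, simplexBoundary_eq_sum, map_sum]
    refine sum_eq_zero fun u _ => ?_
    rw [map_smul, vertexContract_single_of_notMem fun h => hv (mem_of_mem_erase h), smul_zero]

variable (v)

lemma boundaryMap_vertexCone_add_vertexCone_boundaryMap (x : Finset V →₀ ℤ) :
    boundaryMap V (vertexCone v x) + vertexCone v (boundaryMap V x) = x := by
  suffices h : (boundaryMap V).comp (vertexCone v) + (vertexCone v).comp (boundaryMap V) =
      LinearMap.id from LinearMap.congr_fun h x
  refine Finsupp.lhom_ext' fun s => LinearMap.ext_ring ?_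
  simpa [boundaryMap_single] using boundaryMap_vertexCone_single_add s

lemma vertexContract_boundaryMap (x : Finset V →₀ ℤ) :
    vertexContract v (boundaryMap V x) = -boundaryMap V (vertexContract v x) := by
  suffices h : (vertexContract v).comp (boundaryMap V) =
      -(boundaryMap V).comp (vertexContract v) from LinearMap.congr_fun h x
  refine Finsupp.lhom_ext' fun s => LinearMap.ext_ring ?_
  simpa [boundaryMap_single, eq_neg_iff_add_eq_zero] using vertexContract_simplexBoundary_add s

end VertexOperators

lemma Finsupp.exists_ne_zero_of_linearCombination_apply_ne_zero {α β R : Type*} [Semiring R]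
    {f : α → β →₀ R} {x : α →₀ R} {b : β}
    (h : Finsupp.linearCombination R f x b ≠ 0) :
    ∃ a, x a ≠ 0 ∧ f a b ≠ 0 := by
  rw [Finsupp.linearCombination_apply, Finsupp.sum, Finsupp.finsetSum_apply] at h
  obtain ⟨a, ha, hne⟩ := exists_ne_zero_of_sum_ne_zero h
  refine ⟨a, Finsupp.mem_support_iff.mp ha, fun hf => hne ?_⟩
  rw [Finsupp.smul_apply, hf, smul_zero]

namespace SupportedOn

variable {V : Type*} {A B : Set (Finset V)} {x y : Finset V →₀ ℤ}

lemma mono (hAB : A ⊆ B) (hx : SupportedOn A x) : SupportedOn B x :=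
  fun s hs => hAB (hx s hs)

lemma neg (hx : SupportedOn A x) : SupportedOn A (-x) :=
  fun s hs => hx s (by simpa using hs)

lemma sub (hx : SupportedOn A x) (hy : SupportedOn A y) : SupportedOn A (x - y) :=
  fun s hs => by_contra fun hA => hs (by
    rw [Finsupp.sub_apply, not_imp_comm.mp (hx s) hA, not_imp_comm.mp (hy s) hA, sub_zero])

variable [LinearOrder V] {v : V}

lemma vertexCone (hAB : ∀ t ∈ A, v ∉ t → insert v t ∈ B) (hx : SupportedOn A x) :
    SupportedOn B (vertexCone v x) := fun s hs => by
  obtain ⟨t, hxt, hts⟩ := Finsupp.exists_ne_zero_of_linearCombination_apply_ne_zero hs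
  by_cases hv : v ∈ t
  · simp [hv] at hts
  · obtain rfl : insert v t = s := by
      by_contra h
      simp [hv, h] at hts
    exact hAB t (hx t hxt) hv

lemma vertexContract (hAB : ∀ s ∈ A, v ∈ s → s.erase v ∈ B) (hx : SupportedOn A x) :
    SupportedOn B (vertexContract v x) := fun t ht => by
  obtain ⟨s, hxs, hst⟩ := Finsupp.exists_ne_zero_of_linearCombination_apply_ne_zero ht
  by_cases hv : v ∈ s
  · obtain rfl : s.erase v = t := by
      by_contra h
      simp [hv, h] at hst
    exact hAB s (hx s hxs) hv
  · simp [hv] at hst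

end SupportedOn

section AvoidingVertex

variable {V : Type*} [LinearOrder V] {v : V} {x : Finset V →₀ ℤ}

lemma vertexContract_eq_zero (hx : SupportedOn {t | v ∉ t} x) : vertexContract v x = 0 := by
  rw [vertexContract, Finsupp.linearCombination_apply, Finsupp.sum]
  refine sum_eq_zero fun t ht => ?_
  rw [if_neg (hx t (Finsupp.mem_support_iff.mp ht)), smul_zero]

lemma vertexContract_vertexCone (hx : SupportedOn {t | v ∉ t} x) :
    vertexContract v (vertexCone v x) = x := by
  conv_rhs => rw [← Finsupp.sum_single x]
  rw [vertexCone, Finsupp.linearCombination_apply, Finsupp.sum, map_sum, Finsupp.sum]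
  refine sum_congr rfl fun t ht => ?_
  have hv : v ∉ t := hx t (Finsupp.mem_support_iff.mp ht)
  rw [if_neg hv, map_smul, map_smul, vertexContract_single_of_mem (mem_insert_self v t),
    erase_insert hv, smul_smul, smul_smul, mul_assoc, faceSign_mul_self, mul_one,
    Finsupp.smul_single, smul_eq_mul, mul_one]

end AvoidingVertex

section Link

variable {V : Type*}

lemma facesIn_mono {C : Set (Finset V)} {W W' : Set V} {m : ℕ} (h : W ⊆ W') :
    facesIn C W m ⊆ facesIn C W' m :=
  fun _ ⟨hC, hW, hm⟩ => ⟨hC, hW.trans h, hm⟩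

lemma facesIn_diff_singleton_subset {C : Set (Finset V)} {W : Set V} {v : V} {m : ℕ} :
    facesIn C (W \ {v}) m ⊆ {t | v ∉ t} :=
  fun _ ⟨_, hW, _⟩ hv => (hW hv).2 rfl

variable [DecidableEq V] {C : Set (Finset V)} {W : Set V} {v : V} {m : ℕ}

lemma linkOf_empty (C : Set (Finset V)) : linkOf C ∅ = C := by
  ext T
  simp [linkOf]

lemma IsComplex.linkOf (hC : IsComplex C) (S : Finset V) : IsComplex (linkOf C S) :=
  fun _ ⟨hdisj, hT⟩ _ ht => ⟨hdisj.mono_left ht, hC _ hT _ (union_subset_union_right ht)⟩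

lemma linkOf_linkOf_singleton {S : Finset V} (hv : v ∉ S) :
    linkOf (linkOf C {v}) S = linkOf C (insert v S) := by
  ext T
  simp only [_root_.linkOf, Set.mem_ofPred_eq, disjoint_insert_right, disjoint_singleton_right,
    insert_union, ← insert_eq]
  rw [mem_union, not_or]
  tauto

lemma facesIn_linkOf_singleton_subset (hC : IsComplex C) :
    facesIn (linkOf C {v}) W m ⊆ facesIn C (W \ {v}) m :=
  fun _ ⟨⟨hdisj, ht⟩, hW, hm⟩ => ⟨hC _ ht _ subset_union_right,
    fun _ hw => ⟨hW hw, fun hwv => disjoint_singleton_right.mp hdisj (hwv ▸ hw)⟩, hm⟩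

lemma insert_mem_facesIn_of_mem_facesIn_linkOf {t : Finset V}
    (ht : t ∈ facesIn (linkOf C {v}) W m) (hv : v ∉ t) :
    insert v t ∈ facesIn C (insert v W) (m + 1) := by
  obtain ⟨⟨_, hins⟩, hW, hm⟩ := ht
  refine ⟨by rwa [insert_eq], ?_, by rw [card_insert_of_notMem hv, hm]⟩
  rw [coe_insert]
  exact Set.insert_subset_insert hW

lemma erase_mem_facesIn_linkOf {s : Finset V} (hs : s ∈ facesIn C (insert v W) (m + 1))
    (hv : v ∈ s) : s.erase v ∈ facesIn (linkOf C {v}) W m := by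
  obtain ⟨hsC, hW, hm⟩ := hs
  refine ⟨⟨disjoint_singleton_right.mpr (notMem_erase v s), ?_⟩, ?_, ?_⟩
  · rwa [← insert_eq, insert_erase hv]
  · intro w hw
    exact (hW (mem_of_mem_erase hw)).resolve_left (ne_of_mem_erase hw)
  · rw [card_erase_of_mem hv, hm, Nat.add_sub_cancel]

end Link

theorem IsLeray.linkOf_singleton {V : Type*} [LinearOrder V] {C : Set (Finset V)} {d : ℕ}
    (hC : IsComplex C) (hL : IsLeray d C) (v : V) : IsLeray d (linkOf C {v}) := by
  intro W j hj x hx hdx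
  have hxC := hx.mono (facesIn_linkOf_singleton_subset hC)
  obtain ⟨y, hy, hdy⟩ := hL (W \ {v}) j hj x hxC hdx
  have hz : SupportedOn (facesIn C (insert v W) (j + 2)) (vertexCone v x - y) :=
    (hx.vertexCone fun _ ht hv => insert_mem_facesIn_of_mem_facesIn_linkOf ht hv).sub
      (hy.mono (facesIn_mono (Set.sdiff_subset.trans (Set.subset_insert v W))))
  have hdz : boundaryMap V (vertexCone v x - y) = 0 := by
    have hcone := boundaryMap_vertexCone_add_vertexCone_boundaryMap v x
    rw [hdx, map_zero, add_zero] at hcone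
    rw [map_sub, hcone, hdy, sub_self]
  obtain ⟨u, hu, hdu⟩ := hL (insert v W) (j + 1) (by omega) _ hz hdz
  refine ⟨-vertexContract v u,
    (hu.vertexContract fun _ hs hv => erase_mem_facesIn_linkOf hs hv).neg, ?_⟩
  rw [map_neg, ← vertexContract_boundaryMap, hdu, map_sub,
    vertexContract_vertexCone (hxC.mono facesIn_diff_singleton_subset),
    vertexContract_eq_zero (hy.mono facesIn_diff_singleton_subset), sub_zero]

theorem stmt_6_general {V : Type*} [LinearOrder V] (C : Set (Finset V))
    (hC : IsComplex C) (S : Finset V) (d : ℕ)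
    (hL : IsLeray d C) : IsLeray d (linkOf C S) := by
  induction S using Finset.induction generalizing C with
  | empty => rwa [linkOf_empty]
  | insert v S hv ih =>
    rw [← linkOf_linkOf_singleton hv]
    exact ih _ (hC.linkOf {v}) (hL.linkOf_singleton hC v)

/-- The Leray number of a link is at most the Leray number of the complex:
for every face `S` of `C` and every `d`, if `C` is `d`-Leray then so is
`lk_C(S)`; hence `λ(lk_C(S)) ≤ λ(C)`. -/
theorem stmt_6 {V : Type*} [LinearOrder V] (C : Set (Finset V))
    (hC : IsComplex C) (S : Finset V) (hS : S ∈ C) (d : ℕ)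
    (hL : IsLeray d C) : IsLeray d (linkOf C S) :=
  stmt_6_general C hC S d hL
end

section
/- Let v ∈ ℝ^d and let S_1, ..., S_{d+k} be subsets of ℝ^d such that for every K ⊆ [d+k] of size k, v lies in the convex hull of the union of the sets S_i, i ∈ K. Then there exists a rainbow set S (one point from each of some distinct S_i's) with v ∈ conv(S). -/
/-!
After a linear change of coordinates the space is Euclidean, and after discarding all but finitely
many points the rainbow sets are finitely many, so one of them, `T`, has its convex hull nearest to
`v`. If `v ∉ conv T`, let `p` be the point of `conv T` nearest to `v`. The hyperplane through `p`
orthogonal to `v - p` supports `T`, so by Carathéodory `p` is already in the hull of at most `d`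
affinely independent points of `T` on that hyperplane. They use at most `d` colours, so some `k`
colours are free; their union has `v` in its hull, hence contains a point `y` strictly on the side
of `v`. Adding `y` to those points gives a rainbow set whose hull contains a point of the segment
`[p, y]` closer to `v`, a contradiction.
-/

open Metric Module Set
open scoped RealInnerProductSpace

def IsRainbow {ι E : Type*} (S : ι → Set E) (T : Set E) : Prop :=
  ∃ c : E → ι, InjOn c T ∧ ∀ x ∈ T, x ∈ S (c x)

namespace IsRainbow

variable {ι E F : Type*} {S : ι → Set E} {T T' : Set E}

lemma mono (hT : IsRainbow S T) (h : T' ⊆ T) : IsRainbow S T' :=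
  let ⟨c, hc, hcS⟩ := hT
  ⟨c, hc.mono h, fun x hx => hcS x (h hx)⟩

lemma mono_left {S' : ι → Set E} (hT : IsRainbow S T) (h : ∀ i, S i ⊆ S' i) : IsRainbow S' T :=
  let ⟨c, hc, hcS⟩ := hT
  ⟨c, hc, fun x hx => h _ (hcS x hx)⟩

lemma subset_iUnion (hT : IsRainbow S T) : T ⊆ ⋃ i, S i :=
  let ⟨c, _, hcS⟩ := hT
  fun x hx => mem_iUnion.2 ⟨c x, hcS x hx⟩

lemma singleton {x : E} {i : ι} (hx : x ∈ S i) : IsRainbow S {x} :=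
  ⟨fun _ => i, injOn_singleton _ _, fun _ hy => hy ▸ hx⟩

lemma image_equiv (hT : IsRainbow S T) (e : E ≃ F) : IsRainbow (fun i => e '' S i) (e '' T) := by
  obtain ⟨c, hc, hcS⟩ := hT
  refine ⟨c ∘ e.symm, ?_, ?_⟩
  · rintro _ ⟨x, hx, rfl⟩ _ ⟨y, hy, rfl⟩ h
    simp only [Function.comp_apply, Equiv.symm_apply_apply] at h
    rw [hc hx hy h]
  · rintro _ ⟨x, hx, rfl⟩
    exact ⟨x, by simpa using hcS x hx, rfl⟩

lemma finite [Finite ι] (hT : IsRainbow S T) : T.Finite :=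
  let ⟨c, hc, _⟩ := hT
  (toFinite (c '' T)).of_finite_image hc

lemma exists_embedding [Finite ι] (hT : IsRainbow S T) :
    ∃ (m : ℕ) (g : Fin m ↪ ι) (x : Fin m → E), (∀ j, x j ∈ S (g j)) ∧ range x = T := by
  have : Finite T := hT.finite
  obtain ⟨c, hc, hcS⟩ := hT
  let e := Finite.equivFin T
  refine ⟨Nat.card T, ⟨fun j => c (e.symm j), fun j j' h => ?_⟩, fun j => e.symm j,
    fun j => hcS _ (e.symm j).2, ?_⟩
  · exact e.symm.injective (Subtype.ext (hc (e.symm j).2 (e.symm j').2 h))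
  · exact (e.symm.surjective.range_comp Subtype.val).trans Subtype.range_coe

variable [DecidableEq E] [Fintype ι]

lemma exists_card_eq_isRainbow_insert {T : Finset E} (hT : IsRainbow S T) {k : ℕ}
    (h : T.card + k ≤ Fintype.card ι) :
    ∃ K : Finset ι, K.card = k ∧ ∀ i ∈ K, ∀ y ∈ S i, y ∉ T → IsRainbow S ↑(insert y T) := by
  classical
  obtain ⟨c, hc, hcS⟩ := hT
  have hfree : k ≤ (Finset.univ \ T.image c).card := by
    rw [Finset.card_univ_sdiff]
    have := T.card_image_le (f := c)
    omega
  obtain ⟨K, hKfree, rfl⟩ := Finset.exists_subset_card_eq hfree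
  refine ⟨K, rfl, fun i hi y hy hyT => ⟨Function.update c y i, ?_, ?_⟩⟩
  · have hupd : EqOn (Function.update c y i) c T := fun x hx =>
      Function.update_of_ne (ne_of_mem_of_not_mem hx hyT) _ _
    rw [Finset.coe_insert, injOn_insert hyT, hupd.image_eq, Function.update_self]
    refine ⟨hc.congr hupd.symm, fun ⟨x, hx, hxi⟩ => ?_⟩
    exact (Finset.mem_sdiff.1 (hKfree hi)).2 (Finset.mem_image.2 ⟨x, hx, hxi⟩)
  · intro x hx
    rcases Finset.mem_insert.1 hx with rfl | hx
    · simpa using hy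
    · rw [Function.update_of_ne (ne_of_mem_of_not_mem hx hyT)]
      exact hcS x hx

end IsRainbow

lemma AffineIndependent.card_le_finrank_of_forall_eq {k V P ι : Type*} [Field k] [AddCommGroup V]
    [Module k V] [FiniteDimensional k V] [AddTorsor V P] [Fintype ι] {p : ι → P}
    (hp : AffineIndependent k p) {f : P →ᵃ[k] k} (hf : f.linear ≠ 0) {c : k}
    (hpf : ∀ i, f (p i) = c) : Fintype.card ι ≤ finrank k V := by
  obtain h0 | hn := (Fintype.card ι).eq_zero_or_eq_succ_pred
  · simp [h0]
  have hspan : vectorSpan k (range p) ≤ LinearMap.ker f.linear := by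
    rw [vectorSpan_def, Submodule.span_le]
    rintro _ ⟨_, ⟨i, rfl⟩, _, ⟨j, rfl⟩, rfl⟩
    simp [AffineMap.linearMap_vsub, hpf]
  have hker : finrank k (LinearMap.ker f.linear) < finrank k V :=
    Submodule.finrank_lt (by rwa [Ne, LinearMap.ker_eq_top])
  have := Submodule.finrank_mono hspan
  rw [hp.finrank_vectorSpan hn] at this
  omega

lemma mem_convexHull_sep_eq_of_forall_le {E : Type*} [AddCommGroup E] [Module ℝ E] {s : Set E}
    {p : E} (f : E →ₗ[ℝ] ℝ) (hp : p ∈ convexHull ℝ s) (hs : ∀ x ∈ s, f x ≤ f p) :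
    p ∈ convexHull ℝ {x ∈ s | f x = f p} := by
  obtain ⟨ι, _, z, w, hzs, -, hw, hw1, rfl⟩ := eq_pos_convex_span_of_mem_convexHull hp
  have hsum : ∑ i, w i * (f (∑ j, w j • z j) - f (z i)) = 0 := by
    simp only [mul_sub, Finset.sum_sub_distrib, ← Finset.sum_mul, hw1, one_mul, map_sum,
      map_smul, smul_eq_mul, sub_self]
  have hz : ∀ i, f (z i) = f (∑ j, w j • z j) := fun i => by
    have := (Finset.sum_eq_zero_iff_of_nonneg fun j _ =>
      mul_nonneg (hw j).le (sub_nonneg.2 (hs _ (hzs ⟨j, rfl⟩)))).1 hsum i (Finset.mem_univ _)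
    linarith [(mul_eq_zero.1 this).resolve_left (hw i).ne']
  exact (convex_convexHull ℝ _).sum_mem (fun i _ => (hw i).le) hw1
    fun i _ => subset_convexHull ℝ _ ⟨hzs ⟨i, rfl⟩, hz i⟩

lemma infDist_eq_dist_iff_real_inner_le_zero {E : Type*} [NormedAddCommGroup E]
    [InnerProductSpace ℝ E] {K : Set E} (hK : Convex ℝ K) {v p : E} (hp : p ∈ K) :
    infDist v K = dist v p ↔ ∀ x ∈ K, ⟪v - p, x - p⟫ ≤ 0 := by
  simp only [infDist_eq_iInf, dist_eq_norm, eq_comm (a := ⨅ _, _)]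
  exact norm_eq_iInf_iff_real_inner_le_zero hK hp

lemma exists_finite_subfamily_mem_convexHull {ι E : Type*} [Finite ι] [AddCommGroup E]
    [Module ℝ E] {P : Finset ι → Prop} {S : ι → Set E} {v : E}
    (hK : ∀ K, P K → v ∈ convexHull ℝ (⋃ i ∈ K, S i)) :
    ∃ S' : ι → Set E, (∀ i, S' i ⊆ S i) ∧ (∀ i, (S' i).Finite) ∧
      ∀ K, P K → v ∈ convexHull ℝ (⋃ i ∈ K, S' i) := by
  have hfin : ∀ K, P K → ∃ t : Finset E, ↑t ⊆ ⋃ i ∈ K, S i ∧ v ∈ convexHull ℝ (t : Set E) :=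
    fun K hPK => by
      have := hK K hPK
      rw [convexHull_eq_union_convexHull_finite_subsets] at this
      simpa only [mem_iUnion, exists_prop] using this
  choose T hTS hvT using hfin
  set U := ⋃ (K) (hPK : P K), (T K hPK : Set E)
  have hU : U.Finite := finite_iUnion fun K => finite_iUnion fun hPK => (T K hPK).finite_toSet
  refine ⟨fun i => S i ∩ U, fun i => inter_subset_left, fun i => hU.subset inter_subset_right,
    fun K hPK => convexHull_mono (fun x hx => ?_) (hvT K hPK)⟩
  obtain ⟨i, hi, hxi⟩ := mem_iUnion₂.1 (hTS K hPK hx)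
  exact mem_iUnion₂.2 ⟨i, hi, hxi, mem_iUnion₂.2 ⟨K, hPK, hx⟩⟩

section InnerProductSpace

variable {ι E : Type*} [Fintype ι] [NormedAddCommGroup E] [InnerProductSpace ℝ E]
  [FiniteDimensional ℝ E] {k : ℕ} {S : ι → Set E} {v : E}

lemma IsRainbow.exists_infDist_convexHull_lt [DecidableEq E] {T : Finset E} (hT : IsRainbow S T)
    (hne : T.Nonempty) (hv : v ∉ convexHull ℝ (T : Set E)) (hι : finrank ℝ E + k ≤ Fintype.card ι)
    (hK : ∀ K : Finset ι, K.card = k → v ∈ convexHull ℝ (⋃ i ∈ K, S i)) :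
    ∃ T' : Finset E, IsRainbow S T' ∧ T'.Nonempty ∧
      infDist v (convexHull ℝ (T' : Set E)) < infDist v (convexHull ℝ (T : Set E)) := by
  obtain ⟨p, hpT, hpd⟩ := (T.finite_toSet.isCompact_convexHull (𝕜 := ℝ)).exists_infDist_eq_dist
    (convexHull_nonempty_iff.2 hne.to_set) v
  set f := innerₛₗ ℝ (v - p)
  have hfv : f p < f v := by
    have : 0 < ⟪v - p, v - p⟫ := real_inner_self_pos.2 (sub_ne_zero.2 fun h => hv (h ▸ hpT))
    simp only [f, innerₛₗ_apply_apply]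
    rw [inner_sub_right] at this
    linarith
  have hTf : ∀ x ∈ (T : Set E), f x ≤ f p := fun x hx => by
    have := (infDist_eq_dist_iff_real_inner_le_zero (convex_convexHull ℝ _) hpT).1 hpd x
      (subset_convexHull ℝ _ hx)
    simp only [f, innerₛₗ_apply_apply]
    rw [inner_sub_right] at this
    linarith
  have hpF := mem_convexHull_sep_eq_of_forall_le f hpT hTf
  rw [convexHull_eq_union] at hpF
  obtain ⟨t, htT, hai, hpt⟩ := by simpa only [mem_iUnion, exists_prop] using hpF
  have hcard : t.card ≤ finrank ℝ E := by
    have hf : f.toAffineMap.linear ≠ 0 := fun h => by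
      rw [LinearMap.toAffineMap_linear] at h
      simp [h] at hfv
    simpa using hai.card_le_finrank_of_forall_eq hf fun x => (htT x.2).2
  obtain ⟨K, hKk, hins⟩ :=
    (hT.mono fun x hx => (htT hx).1).exists_card_eq_isRainbow_insert (by omega : t.card + k ≤ _)
  obtain ⟨y, hyK, hfy⟩ := (f.convexOn convex_univ).exists_ge_of_mem_convexHull (subset_univ _)
    (hK K hKk)
  obtain ⟨i, hi, hyi⟩ := mem_iUnion₂.1 hyK
  have hyt : y ∉ t := fun hy => by linarith [(htT hy).2]
  refine ⟨insert y t, hins i hi y hyi hyt, Finset.insert_nonempty y t, ?_⟩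
  have hp' : p ∈ convexHull ℝ (↑(insert y t) : Set E) :=
    convexHull_mono (by simp [subset_insert]) hpt
  rw [hpd]
  refine (infDist_le_dist_of_mem hp').lt_of_ne fun h => ?_
  have := (infDist_eq_dist_iff_real_inner_le_zero (convex_convexHull ℝ _) hp').1 h y
    (subset_convexHull ℝ _ (by simp))
  simp only [inner_sub_right] at this
  simp only [f, innerₛₗ_apply_apply] at hfy hfv
  linarith

lemma exists_isRainbow_mem_convexHull_of_finite (hι : finrank ℝ E + k ≤ Fintype.card ι)
    (hS : ∀ i, (S i).Finite)
    (hK : ∀ K : Finset ι, K.card = k → v ∈ convexHull ℝ (⋃ i ∈ K, S i)) :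
    ∃ T : Set E, IsRainbow S T ∧ v ∈ convexHull ℝ T := by
  classical
  obtain ⟨K₀, -, hK₀⟩ := Finset.exists_subset_card_eq (s := (Finset.univ : Finset ι)) (n := k)
    (by rw [Finset.card_univ]; omega)
  obtain ⟨x, hx⟩ := convexHull_nonempty_iff.1 ⟨v, hK K₀ hK₀⟩
  obtain ⟨i, -, hxi⟩ := mem_iUnion₂.1 hx
  let C := (finite_iUnion hS).toFinset.powerset.filter
    fun T : Finset E => IsRainbow S T ∧ T.Nonempty
  have hC : ∀ T : Finset E, T ∈ C ↔ IsRainbow S T ∧ T.Nonempty := fun T => by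
    rw [Finset.mem_filter, Finset.mem_powerset, Set.Finite.subset_toFinset]
    exact ⟨fun h => h.2, fun h => ⟨h.1.subset_iUnion, h⟩⟩
  obtain ⟨T, hTC, hTmin⟩ := C.exists_min_image (fun T => infDist v (convexHull ℝ (T : Set E)))
    ⟨{x}, (hC _).2 ⟨by simpa using IsRainbow.singleton hxi, Finset.singleton_nonempty x⟩⟩
  obtain ⟨hT, hne⟩ := (hC T).1 hTC
  by_contra! h
  obtain ⟨T', hT', hne', hlt⟩ := hT.exists_infDist_convexHull_lt hne (h T hT) hι hK
  exact (hTmin T' ((hC T').2 ⟨hT', hne'⟩)).not_gt hlt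

lemma exists_isRainbow_mem_convexHull_of_innerProductSpace
    (hι : finrank ℝ E + k ≤ Fintype.card ι)
    (hK : ∀ K : Finset ι, K.card = k → v ∈ convexHull ℝ (⋃ i ∈ K, S i)) :
    ∃ T : Set E, IsRainbow S T ∧ v ∈ convexHull ℝ T := by
  obtain ⟨S', hS'S, hS', hK'⟩ := exists_finite_subfamily_mem_convexHull hK
  obtain ⟨T, hT, hvT⟩ := exists_isRainbow_mem_convexHull_of_finite hι hS' hK'
  exact ⟨T, hT.mono_left hS'S, hvT⟩

end InnerProductSpace

theorem exists_isRainbow_mem_convexHull {ι E : Type*} [Fintype ι] [AddCommGroup E] [Module ℝ E]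
    [FiniteDimensional ℝ E] {k : ℕ} {S : ι → Set E} {v : E}
    (hι : finrank ℝ E + k ≤ Fintype.card ι)
    (hK : ∀ K : Finset ι, K.card = k → v ∈ convexHull ℝ (⋃ i ∈ K, S i)) :
    ∃ T : Set E, IsRainbow S T ∧ v ∈ convexHull ℝ T := by
  let e : E ≃ₗ[ℝ] EuclideanSpace ℝ (Fin (finrank ℝ E)) := LinearEquiv.ofFinrankEq _ _ (by simp)
  have hK' : ∀ K : Finset ι, K.card = k → e v ∈ convexHull ℝ (⋃ i ∈ K, e '' S i) :=
    fun K hK' => by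
      have := mem_image_of_mem e.toLinearMap (hK K hK')
      rwa [LinearMap.image_convexHull, image_iUnion₂] at this
  obtain ⟨T, hT, hvT⟩ :=
    exists_isRainbow_mem_convexHull_of_innerProductSpace (by simpa using hι) hK'
  refine ⟨e.symm.toEquiv '' T, ?_, ?_⟩
  · convert hT.image_equiv e.symm.toEquiv using 2 with i
    exact (e.toEquiv.symm_image_image (S i)).symm
  · have := mem_image_of_mem e.symm.toLinearMap hvT
    rw [LinearMap.image_convexHull] at this
    simpa using this

theorem stmt_7_general (d k : ℕ) (v : Fin d → ℝ)
    (S : Fin (d + k) → Set (Fin d → ℝ))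
    (hK : ∀ K : Finset (Fin (d + k)), K.card = k →
      v ∈ convexHull ℝ (⋃ i ∈ K, S i)) :
    ∃ (m : ℕ) (g : Fin m ↪ Fin (d + k)) (x : Fin m → (Fin d → ℝ)),
      (∀ j, x j ∈ S (g j)) ∧ v ∈ convexHull ℝ (Set.range x) := by
  obtain ⟨T, hT, hvT⟩ := exists_isRainbow_mem_convexHull (by simp) hK
  obtain ⟨m, g, x, hx, rfl⟩ := hT.exists_embedding
  exact ⟨m, g, x, hx, hvT⟩

/-- Cooperative colorful Carathéodory: if `v` lies in the convex hull of the
union of every `k` of the `d+k` sets `S_i ⊆ ℝ^d`, then `v` lies in the convex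
hull of some rainbow set. -/
theorem stmt_7 (d k : ℕ) (hk : 1 ≤ k) (v : Fin d → ℝ)
    (S : Fin (d + k) → Set (Fin d → ℝ))
    (hK : ∀ K : Finset (Fin (d + k)), K.card = k →
      v ∈ convexHull ℝ (⋃ i ∈ K, S i)) :
    ∃ (m : ℕ) (g : Fin m ↪ Fin (d + k)) (x : Fin m → (Fin d → ℝ)),
      (∀ j, x j ∈ S (g j)) ∧ v ∈ convexHull ℝ (Set.range x) :=
  stmt_7_general d k v S hK
end

section
/- Let v ∈ ℝ^d and let S_1, ..., S_{d+k-1} be subsets of ℝ^d such that for every K ⊆ [d+k-1] of size k, v lies in the convex cone generated by the union of the sets S_i, i ∈ K. Then there exists a rainbow set S with v ∈ cone(S). -/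
/-
Wlog every `S i` is finite. Among the partial rainbow selections pick one whose cone `C` is
nearest to `v`, and let `w` be the nearest point of `C`. If `w ≠ v`, then `u = v - w` is
orthogonal to `w` and nonpositive on `C`, so `w` lies in the cone of linearly independent
selected points of the hyperplane `u⊥`; these use at most `d - 1` colours. Among the `k`
remaining colours the hypothesis provides a point `y` with `⟪u, y⟫ > 0`, and trading the rest
of the selection for `y` gives a rainbow cone strictly closer to `v`.
-/

/-- `v` lies in the convex cone generated by `S`: it is a nonnegative linear
combination of finitely many points of `S`. -/
def InCone {E : Type*} [AddCommMonoid E] [Module ℝ E] (S : Set E) (v : E) : Prop :=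
  ∃ (m : ℕ) (c : Fin m → ℝ) (x : Fin m → E),
    (∀ j, 0 ≤ c j) ∧ (∀ j, x j ∈ S) ∧ ∑ j, c j • x j = v

open Set Finset Metric PointedCone
open scoped RealInnerProductSpace

lemma inCone_iff_mem_hull {E : Type*} [AddCommMonoid E] [Module ℝ E] {S : Set E} {v : E} :
    InCone S v ↔ v ∈ hull ℝ S := by
  rw [Submodule.mem_span_set']
  constructor
  · rintro ⟨m, c, x, hc, hx, rfl⟩
    exact ⟨m, fun j => ⟨c j, hc j⟩, fun j => ⟨x j, hx j⟩, rfl⟩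
  · rintro ⟨m, c, x, rfl⟩
    exact ⟨m, fun j => c j, fun j => x j, fun j => (c j).2, fun j => (x j).2, rfl⟩

namespace PointedCone

section AddCommMonoid

variable {ι E : Type*} [AddCommMonoid E] [Module ℝ E]

lemma exists_finite_subfamily_mem_hull [Finite ι] {S : ι → Set E} {v : E} {k : ℕ}
    (hK : ∀ K : Finset ι, K.card = k → v ∈ hull ℝ (⋃ i ∈ K, S i)) :
    ∃ T : ι → Set E, (∀ i, T i ⊆ S i) ∧ (∀ i, (T i).Finite) ∧
      ∀ K : Finset ι, K.card = k → v ∈ hull ℝ (⋃ i ∈ K, T i) := by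
  choose F hFS hvF using fun K : {K : Finset ι // K.card = k} =>
    Submodule.mem_span_finite_of_mem_span (hK K.1 K.2)
  refine ⟨fun i => ⋃ K, ↑(F K) ∩ S i, fun i => iUnion_subset fun K => inter_subset_right,
    fun i => finite_iUnion fun K => (F K).finite_toSet.inter_of_left _, fun K hK => ?_⟩
  refine Submodule.span_mono (fun x hx => ?_) (hvF ⟨K, hK⟩)
  obtain ⟨i, hi, hxi⟩ := mem_iUnion₂.mp (hFS ⟨K, hK⟩ hx)
  exact mem_iUnion₂.mpr ⟨i, hi, mem_iUnion.mpr ⟨⟨K, hK⟩, hx, hxi⟩⟩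

lemma mem_hull_image_finset_iff {p : ι → E} {s : Finset ι} {v : E} :
    v ∈ hull ℝ (p '' s) ↔
      ∃ c : ι → ℝ, (∀ i ∈ s, 0 ≤ c i) ∧ ∑ i ∈ s, c i • p i = v := by
  rw [Submodule.mem_span_image_finset_iff_exists_fun']
  constructor
  · rintro ⟨c, rfl⟩
    exact ⟨fun i => c i, fun i _ => (c i).2, rfl⟩
  · rintro ⟨c, hc, rfl⟩
    refine ⟨fun i => (c i).toNNReal, sum_congr rfl fun i hi => ?_⟩
    exact congrArg (· • p i) (Real.coe_toNNReal _ (hc i hi))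

end AddCommMonoid

section AddCommGroup

variable {ι E : Type*} [AddCommGroup E] [Module ℝ E]

lemma exists_mem_hull_image_erase_of_not_linearIndepOn [DecidableEq ι] {p : ι → E}
    {s : Finset ι} {v : E} (hv : v ∈ hull ℝ (p '' s)) (hs : ¬LinearIndepOn ℝ p s) :
    ∃ j ∈ s, v ∈ hull ℝ (p '' ↑(s.erase j)) := by
  obtain ⟨c, hc, rfl⟩ := mem_hull_image_finset_iff.mp hv
  obtain ⟨g, hg, hpos⟩ :
      ∃ g : ι → ℝ, ∑ i ∈ s, g i • p i = 0 ∧ {i ∈ s | 0 < g i}.Nonempty := by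
    obtain ⟨g, hg, i, hi, hgi⟩ := not_linearIndepOn_finset_iff.mp hs
    rcases hgi.lt_or_gt with hgi | hgi
    · exact ⟨-g, by simp [hg], i, by simp [hi, hgi]⟩
    · exact ⟨g, hg, i, by simp [hi, hgi]⟩
  obtain ⟨j, hj, hjmin⟩ := exists_min_image _ (fun i => c i / g i) hpos
  rw [mem_filter] at hj
  set r := c j / g j
  have hc' : ∀ i ∈ s, 0 ≤ c i - r * g i := by
    intro i hi
    rcases le_or_gt (g i) 0 with hgi | hgi
    · nlinarith [hc i hi, div_nonneg (hc j hj.1) hj.2.le]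
    · have := hjmin i (mem_filter.mpr ⟨hi, hgi⟩)
      rw [le_div_iff₀ hgi] at this
      linarith
  refine ⟨j, hj.1, mem_hull_image_finset_iff.mpr
    ⟨fun i => c i - r * g i, fun i hi => hc' i (mem_of_mem_erase hi), ?_⟩⟩
  rw [sum_erase _ (by simp [r, div_mul_cancel₀ _ hj.2.ne'])]
  simp only [sub_smul, mul_smul, sum_sub_distrib, ← smul_sum, hg, smul_zero, sub_zero]

theorem exists_linearIndepOn_of_mem_hull_image {p : ι → E} {s : Finset ι} {v : E}
    (hv : v ∈ hull ℝ (p '' s)) :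
    ∃ t ⊆ s, LinearIndepOn ℝ p t ∧ v ∈ hull ℝ (p '' t) := by
  classical
  induction s using Finset.strongInduction with
  | H s ih =>
    by_cases hs : LinearIndepOn ℝ p s
    · exact ⟨s, subset_rfl, hs, hv⟩
    · obtain ⟨j, hj, hvj⟩ := exists_mem_hull_image_erase_of_not_linearIndepOn hv hs
      obtain ⟨t, hts, ht, hvt⟩ := ih _ (erase_ssubset hj) hvj
      exact ⟨t, hts.trans (erase_subset _ _), ht, hvt⟩

end AddCommGroup

section Topology

variable {ι E : Type*} [NormedAddCommGroup E] [NormedSpace ℝ E]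

lemma isClosed_hull_image_of_linearIndepOn {p : ι → E} {t : Finset ι}
    (ht : LinearIndepOn ℝ p t) : IsClosed (hull ℝ (p '' t) : Set E) := by
  let L := Fintype.linearCombination ℝ (fun i : t => p i)
  have hL : Topology.IsClosedEmbedding L := LinearMap.isClosedEmbedding_of_injective
    (LinearMap.ker_eq_bot.mpr ht.fintypeLinearCombination_injective)
  have hhull : (hull ℝ (p '' t) : Set E) = L '' Ici 0 := by
    ext v
    constructor
    · intro hv
      obtain ⟨c, hc, rfl⟩ := mem_hull_image_finset_iff.mp hv
      exact ⟨fun i => c i, fun i => hc i i.2, by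
        simp [L, Fintype.linearCombination_apply, sum_attach t fun i => c i • p i]⟩
    · rintro ⟨c, hc, rfl⟩
      simp only [L, Fintype.linearCombination_apply]
      exact sum_mem fun i _ => smul_mem _ (hc i) (subset_hull (mem_image_of_mem p i.2))
  rw [hhull]
  exact hL.isClosedMap _ isClosed_Ici

theorem isClosed_hull_range [Fintype ι] (p : ι → E) :
    IsClosed (hull ℝ (range p) : Set E) := by
  have hunion : (hull ℝ (range p) : Set E) =
      ⋃ t : {t : Finset ι // LinearIndepOn ℝ p t}, hull ℝ (p '' t.1) := by
    ext v
    simp only [SetLike.mem_coe, mem_iUnion]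
    constructor
    · intro hv
      obtain ⟨t, -, ht, hvt⟩ :=
        exists_linearIndepOn_of_mem_hull_image (s := univ) (by simpa using hv)
      exact ⟨⟨t, ht⟩, hvt⟩
    · rintro ⟨t, hvt⟩
      exact Submodule.span_mono (image_subset_range _ _) hvt
  rw [hunion]
  exact isClosed_iUnion_of_finite fun t => isClosed_hull_image_of_linearIndepOn t.2

end Topology

section InnerProductSpace

variable {ι E : Type*} [NormedAddCommGroup E] [InnerProductSpace ℝ E]

theorem exists_nearest_point [ProperSpace E] (C : PointedCone ℝ E)
    (hC : IsClosed (C : Set E)) (v : E) :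
    ∃ w ∈ C, infDist v C = dist v w ∧ ⟪v - w, w⟫ = 0 ∧
      ∀ z ∈ C, ⟪v - w, z⟫ ≤ 0 := by
  obtain ⟨w, hw, hdist⟩ := hC.exists_infDist_eq_dist ⟨0, C.zero_mem⟩ v
  have hobtuse : ∀ z ∈ C, ⟪v - w, z - w⟫ ≤ 0 := by
    refine (norm_eq_iInf_iff_real_inner_le_zero C.convex hw).mp ?_
    simp_rw [← dist_eq_norm, ← hdist, infDist_eq_iInf]
  have h0 := hobtuse 0 C.zero_mem
  have h2 := hobtuse ((2 : ℝ) • w) (C.smul_mem zero_le_two hw)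
  have hw0 : ⟪v - w, w⟫ = 0 := by
    rw [zero_sub, inner_neg_right] at h0
    rw [two_smul, add_sub_cancel_right] at h2
    linarith
  refine ⟨w, hw, hdist, hw0, fun z hz => ?_⟩
  simpa [inner_sub_right, hw0] using hobtuse z hz

lemma inner_nonpos_of_mem_hull {S : Set E} {u z : E} (hS : ∀ x ∈ S, ⟪u, x⟫ ≤ 0)
    (hz : z ∈ hull ℝ S) : ⟪u, z⟫ ≤ 0 := by
  induction hz using Submodule.span_induction with
  | mem x hx => exact hS x hx
  | zero => simp
  | add x y _ _ hx hy => rw [inner_add_right]; linarith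
  | smul a x _ hx =>
    change ⟪u, (a : ℝ) • x⟫ ≤ 0
    rw [real_inner_smul_right]
    exact mul_nonpos_of_nonneg_of_nonpos a.2 hx

lemma mem_hull_image_filter_inner_eq_zero {p : ι → E} {s : Finset ι} {u w : E}
    (hw : w ∈ hull ℝ (p '' s)) (huw : ⟪u, w⟫ = 0) (hp : ∀ i ∈ s, ⟪u, p i⟫ ≤ 0) :
    w ∈ hull ℝ (p '' ↑{i ∈ s | ⟪u, p i⟫ = 0}) := by
  obtain ⟨c, hc, rfl⟩ := mem_hull_image_finset_iff.mp hw
  have hterm : ∀ i ∈ s, c i * ⟪u, p i⟫ = 0 := by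
    refine (sum_eq_zero_iff_of_nonpos fun i hi =>
      mul_nonpos_of_nonneg_of_nonpos (hc i hi) (hp i hi)).mp ?_
    simpa [inner_sum, real_inner_smul_right] using huw
  refine mem_hull_image_finset_iff.mpr ⟨c, fun i hi => hc i (mem_filter.mp hi).1, ?_⟩
  exact sum_filter_of_ne fun i hi hne =>
    (mul_eq_zero.mp (hterm i hi)).resolve_left fun h => hne (by simp [h])

end InnerProductSpace

end PointedCone

section InnerProductSpace

variable {ι E : Type*} [NormedAddCommGroup E] [InnerProductSpace ℝ E]

lemma LinearIndepOn.card_lt_finrank_of_inner_eq_zero [FiniteDimensional ℝ E] {p : ι → E}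
    {t : Finset ι} (ht : LinearIndepOn ℝ p t) {u : E} (hu : u ≠ 0)
    (hpu : ∀ i ∈ t, ⟪u, p i⟫ = 0) : t.card < Module.finrank ℝ E := by
  have hle : Submodule.span ℝ (p '' t) ≤ (ℝ ∙ u)ᗮ := by
    rw [Submodule.span_le]
    rintro _ ⟨i, hi, rfl⟩
    exact Submodule.mem_orthogonal_singleton_iff_inner_right.mpr (hpu i hi)
  have hne : (ℝ ∙ u)ᗮ ≠ ⊤ := fun h =>
    hu (inner_self_eq_zero.mp (Submodule.mem_orthogonal_singleton_iff_inner_right.mp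
      (h ▸ Submodule.mem_top)))
  calc t.card = Module.finrank ℝ (Submodule.span ℝ (p '' t)) := by
        rw [image_eq_range, finrank_span_eq_card ht]; simp
    _ ≤ Module.finrank ℝ (ℝ ∙ u)ᗮ := Submodule.finrank_mono hle
    _ < Module.finrank ℝ E := Submodule.finrank_lt hne

lemma exists_norm_sub_smul_lt {u y : E} (h : 0 < ⟪u, y⟫) :
    ∃ s : ℝ, 0 ≤ s ∧ ‖u - s • y‖ < ‖u‖ := by
  have hy : y ≠ 0 := by rintro rfl; simp at h
  have hy2 : 0 < ‖y‖ ^ 2 := by positivity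
  refine ⟨⟪u, y⟫ / ‖y‖ ^ 2, by positivity, ?_⟩
  rw [← sq_lt_sq₀ (norm_nonneg _) (norm_nonneg _), norm_sub_sq_real, real_inner_smul_right,
    norm_smul, mul_pow, Real.norm_eq_abs, sq_abs]
  field_simp
  nlinarith

end InnerProductSpace

/- A selection `f` picks `f i ∈ S i` or the dummy value `0`, which does not change the cone. -/
lemma exists_selection_eqOn_update {ι E : Type*} [DecidableEq ι] [Zero E] {S : ι → Set E}
    {f : ι → E} (hf : ∀ i, f i ∈ insert 0 (S i)) {t : Finset ι} {j : ι} (hjt : j ∉ t)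
    {y : E} (hy : y ∈ S j) :
    ∃ g : ι → E, (∀ i, g i ∈ insert 0 (S i)) ∧ EqOn g f t ∧ g j = y := by
  refine ⟨Function.update (t.piecewise f 0) j y, fun i => ?_,
    fun i (hi : i ∈ t) => by simp [ne_of_mem_of_not_mem hi hjt, hi], by simp⟩
  rcases eq_or_ne i j with rfl | hij
  · simp [hy]
  · by_cases hi : i ∈ t <;> simp [hij, hi, hf i]

section Rainbow

variable {ι E : Type*} [Fintype ι] [NormedAddCommGroup E] [InnerProductSpace ℝ E]
  [FiniteDimensional ℝ E] {k : ℕ} {S : ι → Set E} {v : E}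

theorem exists_infDist_hull_range_lt (hdim : Module.finrank ℝ E + k ≤ Fintype.card ι + 1)
    (hK : ∀ K : Finset ι, K.card = k → v ∈ hull ℝ (⋃ i ∈ K, S i)) {f : ι → E}
    (hf : ∀ i, f i ∈ insert 0 (S i)) (hv : v ∉ hull ℝ (range f)) :
    ∃ g : ι → E, (∀ i, g i ∈ insert 0 (S i)) ∧
      infDist v (hull ℝ (range g)) < infDist v (hull ℝ (range f)) := by
  classical
  obtain ⟨w, hwf, hdist, huw, hu_nonpos⟩ := exists_nearest_point _ (isClosed_hull_range f) v
  set u := v - w with hu_def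
  have hu : u ≠ 0 := fun h => hv (by rwa [sub_eq_zero.mp h])
  obtain ⟨t, hts, ht, hwt⟩ := exists_linearIndepOn_of_mem_hull_image <|
    mem_hull_image_filter_inner_eq_zero (s := univ) (by simpa using hwf) huw
      fun i _ => hu_nonpos _ (subset_hull (mem_range_self i))
  have hcard : t.card + k ≤ Fintype.card ι := by
    have := ht.card_lt_finrank_of_inner_eq_zero hu fun i hi => (mem_filter.mp (hts hi)).2
    omega
  obtain ⟨K, hKt, hKcard⟩ : ∃ K ⊆ tᶜ, K.card = k :=
    exists_subset_card_eq (by rw [card_compl]; omega)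
  have huv : 0 < ⟪u, v⟫ := by
    rw [show v = u + w from (sub_add_cancel v w).symm, inner_add_right, huw, add_zero,
      real_inner_self_eq_norm_sq]
    exact pow_pos (norm_pos_iff.mpr hu) 2
  obtain ⟨y, hyK, hy⟩ : ∃ y ∈ ⋃ i ∈ K, S i, 0 < ⟪u, y⟫ := by
    by_contra! h
    exact (inner_nonpos_of_mem_hull h (hK K hKcard)).not_gt huv
  obtain ⟨j, hjK, hyj⟩ := mem_iUnion₂.mp hyK
  have hjt : j ∉ t := mem_compl.mp (hKt hjK)
  obtain ⟨s, hs, hlt⟩ := exists_norm_sub_smul_lt hy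
  obtain ⟨g, hg, hgf, hgj⟩ := exists_selection_eqOn_update hf hjt hyj
  refine ⟨g, hg, ?_⟩
  have hmem : w + s • y ∈ hull ℝ (range g) := by
    refine add_mem (Submodule.span_mono ?_ hwt) (smul_mem _ hs (subset_hull ⟨j, hgj⟩))
    rintro _ ⟨i, hi, rfl⟩
    exact ⟨i, hgf hi⟩
  calc infDist v (hull ℝ (range g)) ≤ dist v (w + s • y) := infDist_le_dist_of_mem hmem
    _ = ‖u - s • y‖ := by rw [dist_eq_norm, hu_def, sub_add_eq_sub_sub]
    _ < ‖u‖ := hlt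
    _ = infDist v (hull ℝ (range f)) := by rw [hdist, dist_eq_norm]

theorem exists_selection_mem_hull (hS : ∀ i, (S i).Finite)
    (hdim : Module.finrank ℝ E + k ≤ Fintype.card ι + 1)
    (hK : ∀ K : Finset ι, K.card = k → v ∈ hull ℝ (⋃ i ∈ K, S i)) :
    ∃ f : ι → E, (∀ i, f i ∈ insert 0 (S i)) ∧ v ∈ hull ℝ (range f) := by
  obtain ⟨f, hf, hmin⟩ := Set.exists_min_image (univ.pi fun i => insert 0 (S i))
    (fun f => infDist v (hull ℝ (range f))) (Finite.pi fun i => (hS i).insert 0)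
    ⟨0, fun i _ => mem_insert 0 _⟩
  rw [mem_univ_pi] at hf
  refine ⟨f, hf, by_contra fun hv => ?_⟩
  obtain ⟨g, hg, hlt⟩ := exists_infDist_hull_range_lt hdim hK hf hv
  exact (hmin g (mem_univ_pi.mpr hg)).not_gt hlt

theorem exists_rainbow_mem_hull (hdim : Module.finrank ℝ E + k ≤ Fintype.card ι + 1)
    (hK : ∀ K : Finset ι, K.card = k → v ∈ hull ℝ (⋃ i ∈ K, S i)) :
    ∃ (s : Finset ι) (x : ι → E), (∀ i ∈ s, x i ∈ S i) ∧ v ∈ hull ℝ (x '' s) := by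
  classical
  obtain ⟨T, hTS, hT, hKT⟩ := exists_finite_subfamily_mem_hull hK
  obtain ⟨f, hf, hv⟩ := exists_selection_mem_hull hT hdim hKT
  refine ⟨({i | f i ≠ 0} : Finset ι), f,
    fun i hi => hTS i ((hf i).resolve_left (mem_filter.mp hi).2), ?_⟩
  refine Submodule.span_le.mpr ?_ hv
  rintro _ ⟨i, rfl⟩
  by_cases h : f i = 0
  · rw [h]; exact zero_mem _
  · exact subset_hull ⟨i, by simpa using h, rfl⟩

end Rainbow

theorem stmt_8_general (d k : ℕ) (v : Fin d → ℝ)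
    (S : Fin (d + k - 1) → Set (Fin d → ℝ))
    (hK : ∀ K : Finset (Fin (d + k - 1)), K.card = k →
      InCone (⋃ i ∈ K, S i) v) :
    ∃ (m : ℕ) (g : Fin m ↪ Fin (d + k - 1)) (x : Fin m → (Fin d → ℝ)),
      (∀ j, x j ∈ S (g j)) ∧ InCone (Set.range x) v := by
  let e := WithLp.linearEquiv 2 ℝ (Fin d → ℝ)
  obtain ⟨s, x, hxS, hv⟩ := exists_rainbow_mem_hull (v := e.symm v) (S := fun i => e ⁻¹' S i)
    (k := k) (by simp; omega) fun K hK' => by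
      have := Submodule.apply_mem_span_image_of_mem_span (e.symm.toLinearMap.restrictScalars _)
        (inCone_iff_mem_hull.mp (hK K hK'))
      simpa [image_iUnion₂, e.image_symm_eq_preimage] using this
  let g := s.orderEmbOfFin rfl
  refine ⟨s.card, g.toEmbedding, fun j => e (x (g j)),
    fun j => hxS _ (s.orderEmbOfFin_mem rfl j), ?_⟩
  have := Submodule.apply_mem_span_image_of_mem_span (e.toLinearMap.restrictScalars _) hv
  rw [inCone_iff_mem_hull, show (fun j => e (x (g j))) = e ∘ x ∘ g from rfl, range_comp,
    range_comp, range_orderEmbOfFin]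
  simpa using this

/-- Cooperative conical Carathéodory: if `v` lies in the cone of the union of
every `k` of the `d+k-1` sets `S_i ⊆ ℝ^d`, then `v` lies in the cone of some
rainbow set. -/
theorem stmt_8 (d k : ℕ) (hk : 1 ≤ k) (v : Fin d → ℝ)
    (S : Fin (d + k - 1) → Set (Fin d → ℝ))
    (hK : ∀ K : Finset (Fin (d + k - 1)), K.card = k →
      InCone (⋃ i ∈ K, S i) v) :
    ∃ (m : ℕ) (g : Fin m ↪ Fin (d + k - 1)) (x : Fin m → (Fin d → ℝ)),
      (∀ j, x j ∈ S (g j)) ∧ InCone (Set.range x) v :=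
  stmt_8_general d k v S hK
end

section
/- For every d ≥ 1 and k ≥ 2 there exists a family of d+k-2 nonempty finite subsets of ℝ^d and a point v such that every k of them contain v in the cone of their union, yet no rainbow set S satisfies v ∈ cone(S). Explicitly: let v_1,...,v_{d+1} be vertices of a d-simplex with barycenter the origin, let v be the barycenter of {v_1,...,v_d}, take d-1 copies of {v_1,...,v_d} and k-1 copies of {v_{d+1}}. -/
/-- The standard basis vectors of `ℝ^d` (as 0/1 indicator functions). -/
def eVec (d : ℕ) : Fin d → Fin d → ℝ := fun i j => if i = j then 1 else 0

/-- Sharpness of the cooperative cone Carathéodory theorem: for all `d ≥ 1`,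
`k ≥ 2` there are `d+k-2` nonempty finite sets in `ℝ^d` and a point `v` lying
in the cone of the union of every `k` of them, while no rainbow set contains
`v` in its cone. -/
theorem stmt_10 (d k : ℕ) (hd : 1 ≤ d) (hk : 2 ≤ k) :
    ∃ (S : Fin (d + k - 2) → Set (Fin d → ℝ)) (v : Fin d → ℝ),
      (∀ i, (S i).Nonempty ∧ (S i).Finite) ∧
      (∀ K : Finset (Fin (d + k - 2)), K.card = k → InCone (⋃ i ∈ K, S i) v) ∧
      ¬ ∃ (m : ℕ) (g : Fin m ↪ Fin (d + k - 2)) (x : Fin m → (Fin d → ℝ)),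
          (∀ j, x j ∈ S (g j)) ∧ InCone (Set.range x) v := by
  classical
  set b : Fin d → ℝ := fun _ => -1 with hb
  refine ⟨fun i => if (i : ℕ) < d - 1 then Set.range (eVec d) else {b},
    fun _ => 1, ?_, ?_, ?_⟩
  · intro i
    by_cases h : (i : ℕ) < d - 1
    · have : Nonempty (Fin d) := ⟨⟨0, hd⟩⟩
      simp only [if_pos h]
      exact ⟨Set.range_nonempty _, Set.finite_range _⟩
    · simp only [if_neg h]
      exact ⟨Set.singleton_nonempty _, Set.finite_singleton _⟩
  · intro K hK
    -- K must contain an index with value < d - 1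
    have hex : ∃ i ∈ K, (i : ℕ) < d - 1 := by
      by_contra hcon
      push_neg at hcon
      have h2 : Set.InjOn (fun i : Fin (d + k - 2) => (i : ℕ) - (d - 1)) K := by
        intro i hi i' hi' hii'
        dsimp only at hii'
        have h1 := hcon i hi
        have h1' := hcon i' hi'
        have := i.isLt
        have := i'.isLt
        exact Fin.ext (by omega)
      have h1 : K.image (fun i : Fin (d + k - 2) => (i : ℕ) - (d - 1)) ⊆
          Finset.range (k - 1) := by
        intro n hn
        simp only [Finset.mem_image] at hn
        obtain ⟨i, hiK, rfl⟩ := hn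
        have := i.isLt
        simp only [Finset.mem_range]
        omega
      have := Finset.card_le_card h1
      rw [Finset.card_image_of_injOn h2, Finset.card_range, hK] at this
      omega
    obtain ⟨i, hiK, hi⟩ := hex
    refine ⟨d, fun _ => 1, eVec d, fun _ => zero_le_one, ?_, ?_⟩
    · intro j
      exact Set.mem_biUnion hiK (by simp only [if_pos hi]; exact ⟨j, rfl⟩)
    · funext t
      rw [Finset.sum_apply]
      simp [eVec, Finset.sum_ite_eq]
  · rintro ⟨m, g, x, hx, m', c, y, hc, hy, hsum⟩
    -- find a coordinate i0 with eVec d i0 ∉ range x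
    have hi0 : ∃ i0 : Fin d, eVec d i0 ∉ Set.range x := by
      by_contra hcontra
      push_neg at hcontra
      simp only [Set.mem_range] at hcontra
      choose j hj using hcontra
      have hA : ∀ i, (g (j i) : ℕ) < d - 1 := by
        intro i
        by_contra hge
        have hS := hx (j i)
        dsimp only at hS
        rw [if_neg hge] at hS
        have heb : eVec d i = b := by rw [← hj i]; exact hS
        have := congrFun heb i
        simp only [eVec, if_pos rfl, hb] at this
        norm_num at this
      have hinj : Function.Injective (fun i => g (j i)) := by
        intro i i' hgeq
        have hj' : j i = j i' := g.injective hgeq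
        have hee : eVec d i = eVec d i' := by rw [← hj i, ← hj i', hj']
        by_contra hne
        have := congrFun hee i'
        simp [eVec, hne] at this
      have hcard := Fintype.card_le_of_injective
        (fun i : Fin d => (⟨(g (j i) : ℕ), hA i⟩ : Fin (d - 1)))
        (fun i i' h' => hinj (Fin.ext (by simpa using congrArg Fin.val h')))
      simp only [Fintype.card_fin] at hcard
      omega
    obtain ⟨i0, hi0⟩ := hi0
    have hy0 : ∀ j', (y j') i0 ≤ 0 := by
      intro j'
      obtain ⟨jx, hjx⟩ := hy j'
      have hS := hx jx
      dsimp only at hS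
      by_cases hA : (g jx : ℕ) < d - 1
      · rw [if_pos hA] at hS
        obtain ⟨i, hi⟩ := hS
        have hne : i ≠ i0 := by
          rintro rfl
          exact hi0 ⟨jx, hi.symm⟩
        rw [← hjx, ← hi]
        simp [eVec, hne]
      · rw [if_neg hA] at hS
        rw [← hjx, hS]
        simp [hb]
    have h1 : (∑ j', c j' • y j') i0 = 1 := by rw [hsum]
    rw [Finset.sum_apply] at h1
    have h2 : ∑ j' : Fin m', (c j' • y j') i0 ≤ 0 := by
      apply Finset.sum_nonpos
      intro j' _
      have : (c j' • y j') i0 = c j' * (y j') i0 := rfl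
      rw [this]
      exact mul_nonpos_of_nonneg_of_nonpos (hc j') (hy0 j')
    linarith
end

section
/- Let N be a network with n inner vertices, and let F be a family of n+k edge sets of N such that the union of every k members of F contains (the edge set of) a directed s–t path. Then there exists an F-rainbow s–t path: an s–t path each of whose edges belongs to a distinct member of F. -/
/-- A directed `s`–`t` path, recorded as its list of (distinct) vertices,
starting at `s` and ending at `t`. -/
def IsStPath {V : Type*} (s t : V) (p : List V) : Prop :=
  p.Nodup ∧ p.head? = some s ∧ p.getLast? = some t

/-- The (directed) edges of a path given by its vertex list. -/
def pathEdges {V : Type*} (p : List V) : List (V × V) := p.zip p.tail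

/-- The inner vertices of a path: all vertices except the first and last. -/
def innerVerts {V : Type*} (p : List V) : List V := p.tail.dropLast

/-- The family `F` of edge sets has a rainbow `s`–`t` path: an `s`–`t` path
whose edges are injectively represented by distinct members of `F`. -/
def HasRainbowStPath {V ι : Type*} (s t : V) (F : ι → Set (V × V)) : Prop :=
  ∃ p : List V, IsStPath s t p ∧
    ∃ g : Fin (pathEdges p).length → ι, Function.Injective g ∧
      ∀ j, (pathEdges p).get j ∈ F (g j)

/-- A regimentation of a family `F` of edge sets of the network `(V, s, t)`:
a set `paths` of internally disjoint `s`–`t` paths covering all vertices,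
together with a map `I` from the essential subfamily `ess` onto `paths`, such
that the edges of `I i` all belong to `F i`, and each path `p` has exactly
`|E(p)| - 1` essential sets assigned to it. -/
structure Regimentation {V ι : Type*} (s t : V) (F : ι → Set (V × V)) where
  paths : Set (List V)
  isPath : ∀ p ∈ paths, IsStPath s t p
  intDisj : ∀ p ∈ paths, ∀ q ∈ paths, p ≠ q →
    ∀ v ∈ innerVerts p, v ∉ innerVerts q
  cover : ∀ v : V, ∃ p ∈ paths, v ∈ p
  ess : Set ι
  I : ι → List V
  I_mem : ∀ i ∈ ess, I i ∈ paths
  I_surj : ∀ p ∈ paths, ∃ i ∈ ess, I i = p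
  I_rep : ∀ i ∈ ess, ∀ e ∈ pathEdges (I i), e ∈ F i
  I_count : ∀ p ∈ paths, {i | i ∈ ess ∧ I i = p}.ncard = (pathEdges p).length - 1

/-!
Induction on the number of inner vertices. Among any `k` members of `F` there is an `s`–`t`
path; its first edge `(s, v)` lies in some `F j`. If `v = t` this edge is a rainbow path.
Otherwise contract `v` into `s` (the map `Function.update id v s`) and discard `F j`: images of
paths are walks, which contain paths, so the remaining `n - 1 + k` contracted sets satisfy the
hypothesis for a network with `n - 1` inner vertices. A rainbow path there lifts back: only its
first edge `(s, w)` can come from an edge `(v, w)`, and then the edge `(s, v)`, coloured `j`, is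
put in front. To stay within fixed types, the vertices and members still in play are tracked by
finsets `S` and `J`.
-/

section Lists

variable {α β : Type*}

@[simp]
lemma pathEdges_cons_cons (x y : α) (l : List α) :
    pathEdges (x :: y :: l) = (x, y) :: pathEdges (y :: l) := rfl

lemma pathEdges_subset_pathEdges_cons (x : α) (l : List α) :
    pathEdges l ⊆ pathEdges (x :: l) := by
  cases l with
  | nil => simp [pathEdges]
  | cons y l => simp

lemma List.IsSuffix.pathEdges_subset {l₁ l₂ : List α} (h : l₁ <:+ l₂) :
    pathEdges l₁ ⊆ pathEdges l₂ := by
  obtain ⟨u, rfl⟩ := h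
  induction u with
  | nil => exact List.Subset.refl _
  | cons x u ih =>
    exact List.Subset.trans ih (pathEdges_subset_pathEdges_cons x _)

lemma pathEdges_map (f : α → β) (l : List α) :
    pathEdges (l.map f) = (pathEdges l).map (Prod.map f f) := by
  simp [pathEdges, ← List.map_tail, List.zip_map]

lemma mem_of_mem_pathEdges {l : List α} {e : α × α} (he : e ∈ pathEdges l) :
    e.1 ∈ l ∧ e.2 ∈ l :=
  (List.of_mem_zip he).imp id fun h => List.tail_subset l h

lemma IsStPath.exists_cons_cons {s t : α} {p : List α} (hp : IsStPath s t p) (hst : s ≠ t) :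
    ∃ v l, p = s :: v :: l := by
  obtain ⟨-, hs, ht⟩ := hp
  match p, hs, ht with
  | [_], rfl, ht => simp at ht; exact absurd ht hst
  | _ :: v :: l, hs, _ => exact ⟨v, l, by simpa using hs⟩

lemma exists_isStPath_of_walk {w : List α} {x y : α} (hx : w.head? = some x)
    (hy : w.getLast? = some y) :
    ∃ p, IsStPath x y p ∧ p ⊆ w ∧ pathEdges p ⊆ pathEdges w := by
  induction w generalizing x with
  | nil => simp at hx
  | cons a rest ih =>
    obtain rfl : a = x := by simpa using hx
    cases rest with
    | nil =>
      obtain rfl : a = y := by simpa using hy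
      exact ⟨[a], ⟨List.nodup_singleton a, rfl, rfl⟩, List.Subset.refl _, by simp [pathEdges]⟩
    | cons b r =>
      obtain ⟨p, ⟨hnd, hb, hlast⟩, hsub, hedges⟩ :=
        ih rfl (by rwa [List.getLast?_cons_cons] at hy)
      by_cases ha : a ∈ p
      · obtain ⟨l₁, l₂, rfl⟩ := List.append_of_mem ha
        have hsuf : a :: l₂ <:+ l₁ ++ a :: l₂ := List.suffix_append _ _
        refine ⟨a :: l₂, ⟨hnd.sublist hsuf.sublist, rfl, ?_⟩, ?_, ?_⟩
        · rwa [List.getLast?_append_cons] at hlast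
        · exact List.Subset.trans hsuf.subset (List.subset_cons_of_subset _ hsub)
        · exact List.Subset.trans hsuf.pathEdges_subset
            (List.Subset.trans hedges (pathEdges_subset_pathEdges_cons a _))
      · obtain ⟨m, rfl⟩ : ∃ m, p = b :: m := by
          cases p <;> simp_all
        refine ⟨a :: b :: m, ⟨List.nodup_cons.mpr ⟨ha, hnd⟩, rfl, ?_⟩, ?_, ?_⟩
        · rwa [List.getLast?_cons_cons]
        · exact List.cons_subset_cons _ hsub
        · simpa only [pathEdges_cons_cons] using List.cons_subset_cons _ hedges

lemma IsStPath.exists_isStPath_map {s t : α} {p : List α} (hp : IsStPath s t p) (f : α → β) :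
    ∃ q, IsStPath (f s) (f t) q ∧ q ⊆ p.map f ∧
      pathEdges q ⊆ (pathEdges p).map (Prod.map f f) := by
  rw [← pathEdges_map]
  exact exists_isStPath_of_walk (by simp [hp.2.1]) (by simp [List.getLast?_map, hp.2.2])

end Lists

section Network

variable {V ι : Type*}

def IsRainbowColoring (F : ι → Set (V × V)) (J : Finset ι) (p : List V) (c : List ι) : Prop :=
  c.Nodup ∧ (∀ i ∈ c, i ∈ J) ∧ List.Forall₂ (fun e i => e ∈ F i) (pathEdges p) c

lemma IsRainbowColoring.hasRainbowStPath {F : ι → Set (V × V)} {J : Finset ι} {s t : V}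
    {p : List V} {c : List ι} (hc : IsRainbowColoring F J p c) (hp : IsStPath s t p) :
    HasRainbowStPath s t F := by
  obtain ⟨hnd, -, hF⟩ := hc
  have hlen := hF.length_eq
  refine ⟨p, hp, fun m => c.get (Fin.cast hlen m), ?_, fun m => ?_⟩
  · exact (List.nodup_iff_injective_get.mp hnd).comp (Fin.cast_injective hlen)
  · exact (List.forall₂_iff_get.mp hF).2 m m.isLt (hlen ▸ m.isLt)

def UnionsContainStPath (s t : V) (S : Finset V) (F : ι → Set (V × V)) (J : Finset ι) (k : ℕ) :
    Prop :=
  ∀ K ⊆ J, K.card = k → ∃ p, IsStPath s t p ∧ (∀ x ∈ p, x ∈ S) ∧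
    ∀ e ∈ pathEdges p, e ∈ ⋃ i ∈ K, F i

lemma UnionsContainStPath.exists_first_edge [DecidableEq V] {s t : V} {S : Finset V}
    {F : ι → Set (V × V)} {J : Finset ι} {k : ℕ} (h : UnionsContainStPath s t S F J k)
    (hst : s ≠ t) (hk : k ≤ J.card) :
    ∃ j ∈ J, ∃ v, v ≠ s ∧ (s, v) ∈ F j ∧ {s, v, t} ⊆ S := by
  obtain ⟨K, hKJ, hK⟩ := Finset.exists_subset_card_eq hk
  obtain ⟨p, hp, hpS, hpF⟩ := h K hKJ hK
  obtain ⟨v, l, rfl⟩ := hp.exists_cons_cons hst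
  have hsv := hpF (s, v) (by simp)
  simp only [Set.mem_iUnion] at hsv
  obtain ⟨j, hj, hsv⟩ := hsv
  refine ⟨j, hKJ hj, v, ?_, hsv, ?_⟩
  · rintro rfl
    exact (List.nodup_cons.mp hp.1).1 List.mem_cons_self
  · simp only [Finset.insert_subset_iff, Finset.singleton_subset_iff]
    exact ⟨hpS s (by simp), hpS v (by simp), hpS t (List.mem_of_getLast? hp.2.2)⟩

end Network

section Contraction

variable {V ι : Type*} [DecidableEq V] [DecidableEq ι] {s v : V}

lemma update_id_ne (hsv : s ≠ v) (a : V) : Function.update id v s a ≠ v := by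
  rw [Function.update_apply]
  split_ifs with ha
  · exact hsv
  · exact ha

lemma update_id_eq_of_ne {a : V} (h : Function.update id v s a ≠ s) :
    Function.update id v s a = a := by
  by_cases ha : a = v
  · subst ha
    simp at h
  · simp [ha]

lemma eq_or_eq_of_update_id_eq {a : V} (h : Function.update id v s a = s) : a = s ∨ a = v := by
  by_cases ha : a = v
  · exact Or.inr ha
  · simpa [ha] using h

lemma mem_of_mem_image_update_id {E : Set (V × V)} {e : V × V}
    (he : e ∈ Prod.map (Function.update id v s) (Function.update id v s) '' E)
    (h₁ : e.1 ≠ s) (h₂ : e.2 ≠ s) : e ∈ E := by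
  obtain ⟨⟨a, b⟩, hab, rfl⟩ := he
  simp only [Prod.map_apply] at h₁ h₂ ⊢
  rwa [update_id_eq_of_ne h₁, update_id_eq_of_ne h₂]

lemma UnionsContainStPath.contract {t : V} {S : Finset V}
    {F : ι → Set (V × V)} {J : Finset ι} {k : ℕ} (h : UnionsContainStPath s t S F J k)
    (hs : s ∈ S) (hsv : s ≠ v) (htv : t ≠ v) (j : ι) :
    UnionsContainStPath s t (S.erase v)
      (fun i => Prod.map (Function.update id v s) (Function.update id v s) '' F i)
      (J.erase j) k := by
  intro K hK hcard
  obtain ⟨p, hp, hpS, hpF⟩ := h K (hK.trans (J.erase_subset j)) hcard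
  obtain ⟨q, hq, hqp, hqF⟩ := hp.exists_isStPath_map (Function.update id v s)
  rw [Function.update_of_ne hsv, Function.update_of_ne htv] at hq
  refine ⟨q, hq, fun x hx => ?_, fun e he => ?_⟩
  · obtain ⟨a, ha, rfl⟩ := List.mem_map.mp (hqp hx)
    refine Finset.mem_erase.mpr ⟨update_id_ne hsv a, ?_⟩
    rw [Function.update_apply]
    split_ifs
    exacts [hs, hpS a ha]
  · obtain ⟨e₀, he₀, rfl⟩ := List.mem_map.mp (hqF he)
    have hF := hpF e₀ he₀
    simp only [Set.mem_iUnion] at hF ⊢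
    obtain ⟨i, hi, he₀F⟩ := hF
    exact ⟨i, hi, Set.mem_image_of_mem _ he₀F⟩

lemma IsRainbowColoring.lift {t : V} {S : Finset V} {F : ι → Set (V × V)} {J : Finset ι}
    {j : ι} {q : List V} {c : List ι} (hst : s ≠ t) (hq : IsStPath s t q)
    (hqS : ∀ x ∈ q, x ∈ S.erase v)
    (hc : IsRainbowColoring
      (fun i => Prod.map (Function.update id v s) (Function.update id v s) '' F i) (J.erase j) q c)
    (hj : j ∈ J) (hvF : (s, v) ∈ F j) (hvS : v ∈ S) :
    ∃ p c, IsStPath s t p ∧ (∀ x ∈ p, x ∈ S) ∧ IsRainbowColoring F J p c := by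
  obtain ⟨w, r, rfl⟩ := hq.exists_cons_cons hst
  obtain ⟨hnd, hcJ, hcF⟩ := hc
  simp only [pathEdges_cons_cons] at hcF
  obtain ⟨i₀, c₀, ⟨⟨a, b⟩, hab, hw⟩, hc₀, rfl⟩ := List.forall₂_cons_left_iff.mp hcF
  simp only [Prod.map, Prod.mk.injEq] at hw
  obtain ⟨hs_notMem, hwr⟩ := List.nodup_cons.mp hq.1
  have hws : w ≠ s := ne_of_mem_of_not_mem List.mem_cons_self hs_notMem
  obtain rfl : w = b := hw.2.symm.trans (update_id_eq_of_ne (hw.2 ▸ hws))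
  have hedge_ne : ∀ e ∈ pathEdges (w :: r), e.1 ≠ s ∧ e.2 ≠ s := fun e he =>
    (mem_of_mem_pathEdges he).imp (ne_of_mem_of_not_mem · hs_notMem)
      (ne_of_mem_of_not_mem · hs_notMem)
  have htail : List.Forall₂ (fun e i => e ∈ F i) (pathEdges (w :: r)) c₀ :=
    ((List.forall₂_and_left _ _).mpr ⟨hedge_ne, hc₀⟩).imp
      fun _ _ ⟨hes, hei⟩ => mem_of_mem_image_update_id hei hes.1 hes.2
  have hsS : ∀ x ∈ s :: w :: r, x ∈ S := fun x hx => Finset.mem_of_mem_erase (hqS x hx)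
  have hcJ' : ∀ i ∈ i₀ :: c₀, i ∈ J := fun i hi => Finset.mem_of_mem_erase (hcJ i hi)
  rcases eq_or_eq_of_update_id_eq hw.1 with has | hav
  · rw [has] at hab
    exact ⟨s :: w :: r, i₀ :: c₀, hq, hsS, hnd, hcJ', List.Forall₂.cons hab htail⟩
  · rw [hav] at hab
    have hvq : v ∉ s :: w :: r := fun h => (Finset.mem_erase.mp (hqS v h)).1 rfl
    have hsv : s ≠ v := fun h => hvq (h ▸ List.mem_cons_self)
    have hjc : j ∉ i₀ :: c₀ := fun h => (Finset.mem_erase.mp (hcJ j h)).1 rfl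
    simp only [List.forall_mem_cons] at hsS hcJ'
    refine ⟨s :: v :: w :: r, j :: i₀ :: c₀, ⟨?_, rfl, by simpa using hq.2.2⟩,
      by simpa using ⟨hsS.1, hvS, hsS.2⟩, List.nodup_cons.mpr ⟨hjc, hnd⟩,
      by simpa using ⟨hj, hcJ'⟩, List.Forall₂.cons hvF (List.Forall₂.cons hab htail)⟩
    exact List.nodup_cons.mpr ⟨fun h => (List.mem_cons.mp h).elim hsv hs_notMem,
      List.nodup_cons.mpr ⟨fun h => hvq (List.mem_cons_of_mem _ h), hwr⟩⟩

end Contraction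

theorem UnionsContainStPath.exists_rainbow {V ι : Type*} {s t : V} {S : Finset V}
    {F : ι → Set (V × V)} {J : Finset ι} {k : ℕ} (hst : s ≠ t) (n : ℕ) (hS : S.card ≤ n + 2)
    (hJ : n + k ≤ J.card) (h : UnionsContainStPath s t S F J k) :
    ∃ p c, IsStPath s t p ∧ (∀ x ∈ p, x ∈ S) ∧ IsRainbowColoring F J p c := by
  classical
  induction n using Nat.strong_induction_on generalizing S F J with
  | _ n ih =>
    obtain ⟨j, hj, v, hvs, hvF, hsvt⟩ := h.exists_first_edge hst (by omega)
    have hsS : s ∈ S := hsvt (by simp)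
    have hvS : v ∈ S := hsvt (by simp)
    by_cases hvt : v = t
    · subst hvt
      refine ⟨[s, v], [j], ⟨by simp [hst], rfl, rfl⟩, by simp [hsS, hvS], ?_⟩
      exact ⟨List.nodup_singleton j, by simp [hj], List.Forall₂.cons hvF List.Forall₂.nil⟩
    have hS3 : 3 ≤ S.card :=
      Finset.card_eq_three.mpr ⟨s, v, t, hvs.symm, hst, hvt, rfl⟩ ▸ Finset.card_le_card hsvt
    obtain ⟨q, c, hq, hqS, hc⟩ := ih (n - 1) (by omega)
      (by rw [Finset.card_erase_of_mem hvS]; omega) (by rw [Finset.card_erase_of_mem hj]; omega)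
      (h.contract hsS hvs.symm (Ne.symm hvt) j)
    exact hc.lift hst hq hqS hj hvF hvS

theorem stmt_13_general {V : Type*} [Fintype V] (s t : V) (hst : s ≠ t) (n k : ℕ)
    (hV : Fintype.card V = n + 2) (F : Fin (n + k) → Set (V × V))
    (hk : ∀ K : Finset (Fin (n + k)), K.card = k →
      ∃ p : List V, IsStPath s t p ∧ ∀ e ∈ pathEdges p, e ∈ ⋃ i ∈ K, F i) :
    HasRainbowStPath s t F := by
  have h : UnionsContainStPath s t Finset.univ F Finset.univ k := fun K _ hK =>
    (hk K hK).imp fun _ ⟨hp, hpF⟩ => ⟨hp, fun _ _ => Finset.mem_univ _, hpF⟩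
  obtain ⟨p, c, hp, -, hc⟩ := h.exists_rainbow hst n (by simp [hV]) (by simp)
  exact hc.hasRainbowStPath hp

/-- If a network has `n` inner vertices and `F` is a family of `n + k` edge
sets, the union of every `k` of which contains an `s`–`t` path, then there is
an `F`-rainbow `s`–`t` path. -/
theorem stmt_13 {V : Type*} [Fintype V] (s t : V) (hst : s ≠ t) (n k : ℕ)
    (hV : Fintype.card V = n + 2) (F : Fin (n + k) → Set (V × V))
    (hN : ∀ i, ∀ e ∈ F i, e.2 ≠ s ∧ e.1 ≠ t)
    (hk : ∀ K : Finset (Fin (n + k)), K.card = k →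
      ∃ p : List V, IsStPath s t p ∧ ∀ e ∈ pathEdges p, e ∈ ⋃ i ∈ K, F i) :
    HasRainbowStPath s t F :=
  stmt_13_general s t hst n k hV F hk
end

section
/- Let F be a family of edge sets of a network N regimented by R = (Q, I), and suppose there is no F-rainbow s–t path. Then a member F ∈ F is essential (lies in the domain of I) if and only if F contains the edge set of some s–t path; moreover, for essential F, the path I(F) is the unique s–t path whose edges are contained in F. -/
/-! Let `p` be an `s`–`t` path with all its edges in `F i`. The sets regimented to a path `q` of
`Q` give `|E(q)| - 1` colours for the edges of `q`. Hence an edge of `F i` from `q[a]` to a later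
vertex `q[b]` closes a rainbow path (along `q`, across the edge with colour `i`, along `q` again)
unless `b = a + 1` and `q = I(i)`; and for `q = I(i)` so does an edge from `q[a]`, `q[a + 1] ≠ t`,
to a vertex `≠ s` of another path of `Q`. Applied to the last edge of `p`, this makes `i`
essential, with `p` and `I(i)` sharing their penultimate vertex; applied edge by edge from `s`, it
makes `p` follow `I(i)` up to that vertex, where `p` has to end as well. -/

open List

theorem List.forall₂_of_forall_of_length_eq {α β : Type*} {r : α → β → Prop} {l₁ : List α}
    {l₂ : List β} (hlen : l₁.length = l₂.length) (h : ∀ a ∈ l₁, ∀ b ∈ l₂, r a b) :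
    List.Forall₂ r l₁ l₂ :=
  List.forall₂_iff_zip.mpr
    ⟨hlen, fun hab => h _ (List.of_mem_zip hab).1 _ (List.of_mem_zip hab).2⟩

theorem Set.exists_nodup_list_of_le_ncard {α : Type*} {S : Set α} {n : ℕ} (h : n ≤ S.ncard) :
    ∃ L : List α, L.Nodup ∧ L.length = n ∧ ∀ x ∈ L, x ∈ S := by
  obtain ⟨T, hTS, rfl⟩ := Set.exists_subset_card_eq h
  rcases T.finite_or_infinite with hT | hT
  · exact ⟨hT.toFinset.toList, Finset.nodup_toList _,
      by simp [Set.ncard_eq_toFinset_card T hT], fun x hx => hTS (by simpa using hx)⟩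
  · exact ⟨[], List.nodup_nil, by simp [hT.ncard], by simp⟩

theorem List.getElem_eq_of_take_eq {α : Type*} {l l' : List α} {n r : ℕ}
    (h : l.take n = l'.take n) (hr : r < n) (h₁ : r < l.length) (h₂ : r < l'.length) :
    l[r] = l'[r] := by
  simpa [List.getElem?_take, hr, h₁, h₂] using congrArg (·[r]?) h

section Network

variable {V ι : Type*}

theorem length_pathEdges (l : List V) : (pathEdges l).length = l.length - 1 := by
  simp [pathEdges]

theorem pathEdges_take (l : List V) (n : ℕ) :
    pathEdges (l.take (n + 1)) = (pathEdges l).take n := by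
  apply List.ext_getElem
  · simp [length_pathEdges]; omega
  · intro j h₁ h₂
    simp [pathEdges]

theorem pathEdges_drop (l : List V) (n : ℕ) :
    pathEdges (l.drop n) = (pathEdges l).drop n := by
  apply List.ext_getElem
  · simp [length_pathEdges]; omega
  · intro j h₁ h₂
    simp [pathEdges, Nat.add_right_comm]

theorem pathEdges_append {A B : List V} {x y : V} (hA : A.getLast? = some x)
    (hB : B.head? = some y) : pathEdges (A ++ B) = pathEdges A ++ (x, y) :: pathEdges B := by
  obtain ⟨A, rfl⟩ := List.getLast?_eq_some_iff.mp hA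
  obtain ⟨B, rfl⟩ : ∃ B', B = y :: B' := List.head?_eq_some_iff.mp hB
  induction A with
  | nil => rfl
  | cons a A ih =>
    cases A with
    | nil => rfl
    | cons b A => simp_all [pathEdges]

theorem getElem_mem_pathEdges {l : List V} {j : ℕ} (h : j + 1 < l.length) :
    (l[j], l[j + 1]) ∈ pathEdges l :=
  List.mem_iff_getElem.mpr ⟨j, by simp [length_pathEdges]; omega, by simp [pathEdges]⟩

theorem getElem_mem_innerVerts {l : List V} {r : ℕ} (h₁ : 1 ≤ r) (h₂ : r + 1 < l.length) :
    l[r] ∈ innerVerts l := by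
  have h : r - 1 < l.tail.dropLast.length := by simp; omega
  have hr : l.tail.dropLast[r - 1] = l[r] := by
    rw [List.getElem_dropLast, List.getElem_tail]
    congr 1; omega
  exact hr ▸ List.getElem_mem h

namespace IsStPath

variable {s t : V} {p : List V}

theorem getElem_zero (hp : IsStPath s t p) (h : 0 < p.length) : p[0] = s := by
  simpa [List.head?_eq_getElem?, List.getElem?_eq_getElem h] using hp.2.1

theorem getElem_length_sub_one (hp : IsStPath s t p) (h : p.length - 1 < p.length) :
    p[p.length - 1] = t := by
  simpa [List.getLast?_eq_getElem?, List.getElem?_eq_getElem h] using hp.2.2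

theorem ne (hp : IsStPath s t p) (h : 2 ≤ p.length) : s ≠ t := by
  rw [← hp.getElem_zero (by omega), ← hp.getElem_length_sub_one (by omega),
    Ne, hp.1.getElem_inj_iff]
  omega

theorem left_notMem_innerVerts (hp : IsStPath s t p) : s ∉ innerVerts p := by
  obtain ⟨p, rfl⟩ : ∃ p', p = s :: p' := List.head?_eq_some_iff.mp hp.2.1
  exact fun h => (List.nodup_cons.mp hp.1).1 (List.dropLast_subset _ h)

theorem right_notMem_innerVerts (hp : IsStPath s t p) : t ∉ innerVerts p := by
  obtain ⟨p, rfl⟩ := List.getLast?_eq_some_iff.mp hp.2.2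
  intro h
  rw [innerVerts, ← List.tail_dropLast, List.dropLast_concat] at h
  exact List.disjoint_of_nodup_append hp.1 (List.mem_of_mem_tail h)
    (List.mem_singleton_self t)

theorem two_le_length (hp : IsStPath s t p) (hst : s ≠ t) : 2 ≤ p.length := by
  have h₀ : 0 < p.length := List.length_pos_iff.mpr (by rintro rfl; simp [IsStPath] at hp)
  by_contra h
  refine hst ((hp.getElem_zero h₀).symm.trans ?_)
  convert hp.getElem_length_sub_one (by omega) using 2
  omega

theorem eq_or_mem_innerVerts_of_mem_take (hp : IsStPath s t p) {n : ℕ} (hn : n < p.length)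
    {v : V} (hv : v ∈ p.take n) : v = s ∨ v ∈ innerVerts p := by
  obtain ⟨r, hr, rfl⟩ := List.mem_iff_getElem.mp hv
  simp only [List.length_take] at hr
  rw [List.getElem_take]
  rcases Nat.eq_zero_or_pos r with rfl | hr₀
  · exact Or.inl (hp.getElem_zero _)
  · exact Or.inr (getElem_mem_innerVerts hr₀ (by omega))

theorem eq_or_mem_innerVerts_of_mem_drop (hp : IsStPath s t p) {n : ℕ} (hn : 1 ≤ n)
    {v : V} (hv : v ∈ p.drop n) : v = t ∨ v ∈ innerVerts p := by
  obtain ⟨r, hr, rfl⟩ := List.mem_iff_getElem.mp hv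
  simp only [List.length_drop] at hr
  rw [List.getElem_drop]
  by_cases hlast : n + r + 1 = p.length
  · exact Or.inl (by convert hp.getElem_length_sub_one (by omega) using 2; omega)
  · exact Or.inr (getElem_mem_innerVerts (by omega) (by omega))

end IsStPath

section Rainbow

variable {s t : V} {F : ι → Set (V × V)}

theorem hasRainbowStPath_of_forall₂ {p : List V} (hp : IsStPath s t p) {L : List ι}
    (hL : L.Nodup) (h : List.Forall₂ (fun e c => e ∈ F c) (pathEdges p) L) :
    HasRainbowStPath s t F := by
  obtain ⟨hlen, hget⟩ := List.forall₂_iff_get.mp h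
  refine ⟨p, hp, fun j => L.get (Fin.cast hlen j), ?_, fun j => hget j j.2 (hlen ▸ j.2)⟩
  exact fun j₁ j₂ hj => Fin.cast_injective hlen (List.nodup_iff_injective_get.mp hL hj)

theorem ne_of_not_hasRainbowStPath (hno : ¬ HasRainbowStPath s t F) : s ≠ t := by
  rintro rfl
  exact hno (hasRainbowStPath_of_forall₂ (p := [s]) ⟨List.nodup_singleton s, rfl, rfl⟩
    List.nodup_nil List.Forall₂.nil)

end Rainbow

namespace Regimentation

variable {s t : V} {F : ι → Set (V × V)} (R : Regimentation s t F)

def fiber (q : List V) : Set ι := {c | c ∈ R.ess ∧ R.I c = q}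

variable {R} {q q' : List V} {i : ι}

theorem mem_of_mem_fiber {c : ι} (hc : c ∈ R.fiber q) {e : V × V} (he : e ∈ pathEdges q) :
    e ∈ F c :=
  R.I_rep c hc.1 e (hc.2 ▸ he)

theorem disjoint_fiber (h : q ≠ q') : Disjoint (R.fiber q) (R.fiber q') :=
  Set.disjoint_left.mpr fun _ hc hc' => h (hc.2.symm.trans hc'.2)

theorem ncard_fiber (hq : q ∈ R.paths) : (R.fiber q).ncard = q.length - 2 := by
  rw [fiber, R.I_count q hq, length_pathEdges, Nat.sub_sub]

theorem length_sub_three_le_ncard_fiber_diff (hq : q ∈ R.paths) (i : ι) :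
    q.length - 3 ≤ (R.fiber q \ {i}).ncard := by
  have := Set.pred_ncard_le_ncard_sdiff_singleton (R.fiber q) i
  rw [ncard_fiber hq] at this
  omega

theorem ncard_fiber_diff_of_notMem (hq : q ∈ R.paths) (hi : i ∉ R.fiber q) :
    (R.fiber q \ {i}).ncard = q.length - 2 := by
  rw [Set.sdiff_singleton_eq_self hi, ncard_fiber hq]

theorem exists_getElem_eq_of_ne_left {v : V} (hv : v ≠ s) :
    ∃ q ∈ R.paths, ∃ j, ∃ h : j < q.length, 1 ≤ j ∧ q[j] = v := by
  obtain ⟨q, hq, hvq⟩ := R.cover v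
  obtain ⟨j, hj, rfl⟩ := List.mem_iff_getElem.mp hvq
  refine ⟨q, hq, j, hj, Nat.one_le_iff_ne_zero.mpr ?_, rfl⟩
  rintro rfl
  exact hv ((R.isPath q hq).getElem_zero hj)

theorem exists_getElem_eq_of_ne_right {v : V} (hv : v ≠ t) :
    ∃ q ∈ R.paths, ∃ j, ∃ h : j + 1 < q.length, q[j] = v := by
  obtain ⟨q, hq, hvq⟩ := R.cover v
  obtain ⟨j, hj, rfl⟩ := List.mem_iff_getElem.mp hvq
  refine ⟨q, hq, j, ?_, rfl⟩
  by_contra h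
  exact hv (by convert (R.isPath q hq).getElem_length_sub_one (by omega) using 2; omega)

theorem hasRainbowStPath_of_jump (hq : q ∈ R.paths) (hq' : q' ∈ R.paths) {a b : ℕ}
    (ha : a < q.length) (hb : b < q'.length) (hF : (q[a], q'[b]) ∈ F i)
    (hnd : (q.take (a + 1) ++ q'.drop b).Nodup) {LA LB : List ι} (hL : (i :: (LA ++ LB)).Nodup)
    (hLA : LA.length = a) (hLB : LB.length = q'.length - 1 - b)
    (hA : ∀ c ∈ LA, c ∈ R.fiber q) (hB : ∀ c ∈ LB, c ∈ R.fiber q') :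
    HasRainbowStPath s t F := by
  have hpath : IsStPath s t (q.take (a + 1) ++ q'.drop b) := by
    refine ⟨hnd, ?_, ?_⟩
    · simp [List.head?_append, List.head?_take, (R.isPath q hq).2.1]
    · simp [List.getLast?_append, List.getLast?_drop, (R.isPath q' hq').2.2]
      omega
  refine hasRainbowStPath_of_forall₂ hpath (List.nodup_middle.mpr hL) ?_
  rw [pathEdges_append (x := q[a]) (y := q'[b]) (by simp [List.getLast?_take, ha])
    (by simp [List.head?_drop, hb]), pathEdges_take, pathEdges_drop]
  refine List.rel_append (List.forall₂_of_forall_of_length_eq ?_ ?_)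
    (List.Forall₂.cons hF (List.forall₂_of_forall_of_length_eq ?_ ?_))
  · simp [length_pathEdges, hLA]; omega
  · exact fun e he c hc => mem_of_mem_fiber (hA c hc) (List.take_subset _ _ he)
  · simp [length_pathEdges, hLB]
  · exact fun e he c hc => mem_of_mem_fiber (hB c hc) (List.drop_subset _ _ he)

theorem hasRainbowStPath_of_shortcut (hq : q ∈ R.paths) {a b : ℕ} (hab : a < b)
    (hb : b < q.length) (hF : (q[a], q[b]) ∈ F i) (hi : b = a + 1 → i ∉ R.fiber q) :
    HasRainbowStPath s t F := by
  have hcount : a + (q.length - 1 - b) ≤ (R.fiber q \ {i}).ncard := by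
    by_cases hb' : b = a + 1
    · rw [ncard_fiber_diff_of_notMem hq (hi hb')]; omega
    · have := length_sub_three_le_ncard_fiber_diff hq i; omega
  obtain ⟨L, hLnd, hLlen, hLS⟩ := Set.exists_nodup_list_of_le_ncard hcount
  have hnd : (q.take (a + 1) ++ q.drop b).Nodup := by
    refine List.Sublist.nodup ?_ (R.isPath q hq).1
    calc q.take (a + 1) ++ q.drop b <+ q.take b ++ q.drop b :=
          (List.take_sublist_take_left hab).append_right _
      _ = q := List.take_append_drop b q
  refine hasRainbowStPath_of_jump hq hq (by omega) hb hF hnd (LA := L.take a) (LB := L.drop a)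
    ?_ (by simp; omega) (by simp; omega) (fun c hc => (hLS c (List.take_subset _ _ hc)).1)
    (fun c hc => (hLS c (List.drop_subset _ _ hc)).1)
  rw [List.take_append_drop]
  exact List.nodup_cons.mpr ⟨fun h => (hLS i h).2 rfl, hLnd⟩

theorem hasRainbowStPath_of_crossing (hq : q ∈ R.paths) (hq' : q' ∈ R.paths) (hne : q ≠ q')
    {a b : ℕ} (ha : a + 2 < q.length) (hb₁ : 1 ≤ b) (hb : b < q'.length)
    (hF : (q[a], q'[b]) ∈ F i) (hi : i ∉ R.fiber q') : HasRainbowStPath s t F := by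
  have hp := R.isPath q hq
  have hp' := R.isPath q' hq'
  obtain ⟨LA, hLAnd, hLAlen, hLAS⟩ := Set.exists_nodup_list_of_le_ncard (S := R.fiber q \ {i})
    (n := a) (by have := length_sub_three_le_ncard_fiber_diff hq i; omega)
  obtain ⟨LB, hLBnd, hLBlen, hLBS⟩ := Set.exists_nodup_list_of_le_ncard (S := R.fiber q')
    (n := q'.length - 1 - b) (by rw [ncard_fiber hq']; omega)
  have hnd : (q.take (a + 1) ++ q'.drop b).Nodup := by
    refine List.nodup_append.mpr ⟨(List.take_sublist _ _).nodup hp.1,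
      (List.drop_sublist _ _).nodup hp'.1, ?_⟩
    rintro v hv _ hv' rfl
    rcases hp.eq_or_mem_innerVerts_of_mem_take (by omega) hv with rfl | hvq <;>
      rcases hp'.eq_or_mem_innerVerts_of_mem_drop hb₁ hv' with hvt | hvq'
    · exact hp.ne (by omega) hvt
    · exact hp'.left_notMem_innerVerts hvq'
    · exact hp.right_notMem_innerVerts (hvt ▸ hvq)
    · exact R.intDisj q hq q' hq' hne v hvq hvq'
  refine hasRainbowStPath_of_jump hq hq' (by omega) hb hF hnd ?_ hLAlen hLBlen
    (fun c hc => (hLAS c hc).1) hLBS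
  refine List.nodup_cons.mpr ⟨?_, List.nodup_append.mpr ⟨hLAnd, hLBnd, ?_⟩⟩
  · rw [List.mem_append, not_or]
    exact ⟨fun h => (hLAS i h).2 rfl, fun h => hi (hLBS i h)⟩
  · rintro c hc _ hc' rfl
    exact Set.disjoint_left.mp (disjoint_fiber hne) (hLAS c hc).1 (hLBS c hc')

variable {p : List V}

variable (R) in
theorem exists_mem_fiber_penultimate_eq (hno : ¬ HasRainbowStPath s t F) (hp : IsStPath s t p)
    (hpF : ∀ e ∈ pathEdges p, e ∈ F i) :
    ∃ q ∈ R.paths, i ∈ R.fiber q ∧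
      ∃ (hq₂ : 2 ≤ q.length) (hp₂ : 2 ≤ p.length), q[q.length - 2] = p[p.length - 2] := by
  have hp₂ := hp.two_le_length (ne_of_not_hasRainbowStPath hno)
  have hplast := hp.getElem_length_sub_one (by omega)
  have hne : p[p.length - 2] ≠ t := by
    rw [← hplast, Ne, hp.1.getElem_inj_iff]; omega
  obtain ⟨q, hq, j, hj, hqj⟩ := R.exists_getElem_eq_of_ne_right hne
  have hqlast := (R.isPath q hq).getElem_length_sub_one (by omega)
  have hedge : (q[j], q[q.length - 1]) ∈ F i := by
    rw [hqj, hqlast, ← hplast]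
    convert hpF _ (getElem_mem_pathEdges (j := p.length - 2) (by omega)) using 3
    omega
  by_contra h
  refine hno (hasRainbowStPath_of_shortcut hq (by omega) (by omega) hedge fun hj' hi =>
    h ⟨q, hq, hi, by omega, hp₂, ?_⟩)
  rw [← hqj]
  congr 1
  omega

theorem getElem_succ_eq_of_take_eq_of_add_two_lt (hno : ¬ HasRainbowStPath s t F)
    (hp : IsStPath s t p) (hpF : ∀ e ∈ pathEdges p, e ∈ F i) (hq : q ∈ R.paths)
    (hi : i ∈ R.fiber q) {k : ℕ} (hkp : k + 1 < p.length) (hkq : k + 2 < q.length)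
    (htake : p.take (k + 1) = q.take (k + 1)) : p[k + 1] = q[k + 1] := by
  have hpk : p[k] = q[k] := List.getElem_eq_of_take_eq htake (by omega) _ _
  have hedge : (q[k], p[k + 1]) ∈ F i := hpk ▸ hpF _ (getElem_mem_pathEdges hkp)
  by_contra hne
  have hws : p[k + 1] ≠ s := by
    rw [← hp.getElem_zero (by omega), Ne, hp.1.getElem_inj_iff]; omega
  obtain ⟨q', hq', b, hb, hb₁, hqb⟩ := R.exists_getElem_eq_of_ne_left hws
  rw [← hqb] at hedge
  by_cases hqq' : q = q'
  · subst hqq'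
    have hkb : k + 1 < b := by
      by_contra h
      rcases (by omega : b ≤ k ∨ b = k + 1) with hbk | rfl
      · have : p[b] = p[k + 1] := by
          rw [← hqb, List.getElem_eq_of_take_eq htake (by omega) _ _]
        rw [hp.1.getElem_inj_iff] at this
        omega
      · exact hne hqb.symm
    exact hno (hasRainbowStPath_of_shortcut hq (by omega) hb hedge fun h => absurd h (by omega))
  · exact hno (hasRainbowStPath_of_crossing hq hq' hqq' hkq hb₁ hb hedge
      (Set.disjoint_left.mp (disjoint_fiber hqq') hi))

theorem getElem_succ_eq_of_take_eq (hno : ¬ HasRainbowStPath s t F) (hp : IsStPath s t p)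
    (hpF : ∀ e ∈ pathEdges p, e ∈ F i) (hq : q ∈ R.paths) (hi : i ∈ R.fiber q) {k : ℕ}
    (hkp : k + 1 < p.length) (hkq : k < q.length) (htake : p.take (k + 1) = q.take (k + 1)) :
    ∃ h : k + 1 < q.length, p[k + 1] = q[k + 1] := by
  have hpk : p[k] = q[k] := List.getElem_eq_of_take_eq htake (by omega) _ _
  have hplast := hp.getElem_length_sub_one (by omega)
  have hqlast := (R.isPath q hq).getElem_length_sub_one (by omega)
  have hkq₁ : k + 1 < q.length := by
    by_contra h
    have : p[k] = p[p.length - 1] := by rw [hplast, hpk, ← hqlast]; congr 1; omega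
    rw [hp.1.getElem_inj_iff] at this
    omega
  refine ⟨hkq₁, ?_⟩
  by_cases hkq₂ : k + 2 = q.length
  · -- `q[k]` is the penultimate vertex of `q`, hence also that of `p`
    obtain ⟨q₀, -, hi₀, _, _, hpen⟩ := R.exists_mem_fiber_penultimate_eq hno hp hpF
    have hq₀ : q₀ = q := hi₀.2.symm.trans hi.2
    subst q₀
    have : p[k] = p[p.length - 2] := by rw [hpk, ← hpen]; congr 1; omega
    rw [hp.1.getElem_inj_iff] at this
    calc p[k + 1] = p[p.length - 1] := by congr 1; omega
      _ = q[q.length - 1] := by rw [hplast, hqlast]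
      _ = q[k + 1] := by congr 1; omega
  · exact getElem_succ_eq_of_take_eq_of_add_two_lt hno hp hpF hq hi hkp (by omega) htake

theorem take_eq_take_of_mem_fiber (hno : ¬ HasRainbowStPath s t F) (hp : IsStPath s t p)
    (hpF : ∀ e ∈ pathEdges p, e ∈ F i) (hq : q ∈ R.paths) (hi : i ∈ R.fiber q) :
    ∀ k < p.length, k < q.length ∧ p.take (k + 1) = q.take (k + 1)
  | 0, _ => by
    have hq₂ := (R.isPath q hq).two_le_length (ne_of_not_hasRainbowStPath hno)
    refine ⟨by omega, ?_⟩
    rw [List.take_one, List.take_one, hp.2.1, (R.isPath q hq).2.1]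
  | k + 1, hk => by
    obtain ⟨hkq, htake⟩ := take_eq_take_of_mem_fiber hno hp hpF hq hi k (by omega)
    obtain ⟨hkq', heq⟩ := getElem_succ_eq_of_take_eq hno hp hpF hq hi hk hkq htake
    refine ⟨hkq', ?_⟩
    rw [List.take_add_one, List.take_add_one (l := q), htake, List.getElem?_eq_getElem hk,
      List.getElem?_eq_getElem hkq', heq]

theorem eq_of_mem_fiber (hno : ¬ HasRainbowStPath s t F) (hp : IsStPath s t p)
    (hpF : ∀ e ∈ pathEdges p, e ∈ F i) (hq : q ∈ R.paths) (hi : i ∈ R.fiber q) : p = q := by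
  have hp₂ := hp.two_le_length (ne_of_not_hasRainbowStPath hno)
  obtain ⟨hlen, htake⟩ := take_eq_take_of_mem_fiber hno hp hpF hq hi (p.length - 1) (by omega)
  have hq' := R.isPath q hq
  have hlast : q[p.length - 1] = q[q.length - 1] := by
    rw [hq'.getElem_length_sub_one, ← List.getElem_eq_of_take_eq htake (by omega) (by omega) hlen,
      hp.getElem_length_sub_one]
  have hpq : p.length = q.length := by
    have := hq'.1.getElem_inj_iff.mp hlast
    omega
  rwa [Nat.sub_add_cancel (by omega), List.take_length, hpq, List.take_length] at htake

variable (R) in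
theorem mem_ess_and_eq_of_forall_mem (hno : ¬ HasRainbowStPath s t F) (hp : IsStPath s t p)
    (hpF : ∀ e ∈ pathEdges p, e ∈ F i) : i ∈ R.ess ∧ p = R.I i := by
  obtain ⟨q, hq, hi, -⟩ := R.exists_mem_fiber_penultimate_eq hno hp hpF
  exact ⟨hi.1, hi.2 ▸ eq_of_mem_fiber hno hp hpF hq hi⟩

end Regimentation

end Network

/-- Let `F` be regimented by `R` and suppose there is no `F`-rainbow `s`–`t`
path.  Then a member of `F` is essential iff it contains the edge set of some
`s`–`t` path, and for essential `F i` the path `I i` is the unique `s`–`t`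
path whose edges are contained in `F i`. -/
theorem stmt_15 {V ι : Type*} (s t : V) (F : ι → Set (V × V))
    (R : Regimentation s t F) (hno : ¬ HasRainbowStPath s t F) :
    ∀ i : ι,
      (i ∈ R.ess ↔ ∃ p : List V, IsStPath s t p ∧ ∀ e ∈ pathEdges p, e ∈ F i) ∧
      (i ∈ R.ess → ∀ p : List V,
        IsStPath s t p → (∀ e ∈ pathEdges p, e ∈ F i) → p = R.I i) := by
  intro i
  refine ⟨⟨fun hi => ⟨R.I i, R.isPath _ (R.I_mem i hi), R.I_rep i hi⟩, ?_⟩, ?_⟩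
  · rintro ⟨p, hp, hpF⟩
    exact (R.mem_ess_and_eq_of_forall_mem hno hp hpF).1
  · intro _ p hp hpF
    exact (R.mem_ess_and_eq_of_forall_mem hno hp hpF).2
end
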